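/- arXiv:1301.5494 — 4 statements merged into one kernel-verified Lean document; each statement's English description precedes it below -/
import Mathlib

section
/- Assume the interaction kernel K satisfies (HK1)-(HK2). For each Borel probability measure μ^in on ℝ^d with finite first moment, there exists a unique map Z : ℝ × ℝ^d → ℝ^d, continuous in both variables with at most linear growth in the second variable locally uniformly in time (i.e. sup_{ζ}|Z(t,ζ)|/(1+|ζ|) is finite, locally uniformly in t), such that for every ζ^in ∈ ℝ^d the function t ↦ Z(t,ζ^in) is of class C¹ and satisfies ∂_t Z(t,ζ^in) = ∫_{ℝ^d} K(Z(t,ζ^in), z') μ(t)(dz') with μ(t) := Z(t,·)#μ^in and Z(0,ζ^in) = ζ^in. -/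
open MeasureTheory Real Filter Topology Set BoundedContinuousFunction
open scoped ENNReal NNReal

/-!
Encode a map of at most linear growth as `Z ζ = ζ + (1 + ‖ζ‖) • v ζ` with `v` bounded and
continuous. Since `K` is Lipschitz and `μ` has a finite first moment, the characteristic equation
becomes an autonomous ODE `v' = Φ v` in the Banach space `E →ᵇ E` whose field `Φ` is globally
Lipschitz. Picard–Lindelöf on intervals of a fixed length, glued together, gives a global solution
with `v 0 = 0`, i.e. `Z 0 = id`. Conversely, any flow with these properties is encoded by a path
`v` whose evaluations `v t ζ` solve `v' = Φ v` pointwise; `v` is then locally Lipschitz, hence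
differentiable in the sup norm, and uniqueness for Lipschitz ODEs identifies it with the first
solution.
-/

noncomputable section

section GlobalExistence

theorem eqOn_ite_le_of_eq {α : Type*} {γ₁ γ₂ : ℝ → α} {b : ℝ} (hb : γ₁ b = γ₂ b) :
    EqOn (fun t => if t ≤ b then γ₁ t else γ₂ t) γ₂ (Ici b) := by
  intro t ht
  rcases (mem_Ici.1 ht).eq_or_lt with rfl | hlt
  · simp [hb]
  · simp [not_le.2 hlt]

variable {E : Type*} [NormedAddCommGroup E] [NormedSpace ℝ E]

theorem IsIntegralCurveOn.hasDerivWithinAt_of_eqOn {γ γ' : ℝ → E} {v : ℝ → E → E} {s : Set ℝ}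
    (hγ' : IsIntegralCurveOn γ' v s) (hs : IsClosed s) (heq : EqOn γ γ' s) (t : ℝ) :
    HasDerivWithinAt γ (v t (γ t)) s t := by
  by_cases ht : t ∈ s
  · rw [heq ht]
    exact (hγ' t ht).congr heq (heq ht)
  · exact HasFDerivWithinAt.of_notMem_closure (by rwa [hs.closure_eq])

theorem IsIntegralCurveOn.ite_Icc {γ₁ γ₂ : ℝ → E} {v : ℝ → E → E} {a b c : ℝ}
    (h₁ : IsIntegralCurveOn γ₁ v (Icc a b)) (h₂ : IsIntegralCurveOn γ₂ v (Icc b c))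
    (hb : γ₁ b = γ₂ b) (hab : a ≤ b) (hbc : b ≤ c) :
    IsIntegralCurveOn (fun t => if t ≤ b then γ₁ t else γ₂ t) v (Icc a c) := by
  have heq₁ : EqOn (fun t => if t ≤ b then γ₁ t else γ₂ t) γ₁ (Icc a b) :=
    fun t ht => if_pos ht.2
  have heq₂ : EqOn _ γ₂ (Icc b c) := (eqOn_ite_le_of_eq hb).mono Icc_subset_Ici_self
  rw [← Icc_union_Icc_eq_Icc hab hbc]
  exact fun t _ => (h₁.hasDerivWithinAt_of_eqOn isClosed_Icc heq₁ t).union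
    (h₂.hasDerivWithinAt_of_eqOn isClosed_Icc heq₂ t)

theorem exists_isIntegralCurve_of_forall_isIntegralCurveOn_Icc {v : ℝ → E → E} {c : ℝ≥0}
    (hv : ∀ t, LipschitzWith c (v t)) {x₀ : E}
    (h : ∀ T, ∃ γ : ℝ → E, γ 0 = x₀ ∧ IsIntegralCurveOn γ v (Icc (-T) T)) :
    ∃ γ : ℝ → E, γ 0 = x₀ ∧ IsIntegralCurve γ v := by
  choose γ hγ0 hγ using h
  have hderiv : ∀ T, ∀ t, |t| < T → HasDerivAt (γ T) (v t (γ T t)) t := fun T t ht =>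
    (hγ T t ⟨(abs_lt.1 ht).1.le, (abs_lt.1 ht).2.le⟩).hasDerivAt
      (Icc_mem_nhds (abs_lt.1 ht).1 (abs_lt.1 ht).2)
  have hcons : ∀ T T' t, |t| < T → |t| < T' → γ T t = γ T' t := by
    intro T T' t hT hT'
    have hmin : |t| < min T T' := lt_min hT hT'
    have hIoo : ∀ s ∈ Ioo (-min T T') (min T T'), |s| < T ∧ |s| < T' := fun s hs =>
      lt_min_iff.1 (abs_lt.2 hs)
    refine ODE_solution_unique_of_mem_Ioo (s := fun _ => univ) (t₀ := 0)
      (fun s _ => (hv s).lipschitzOnWith) ⟨by linarith [abs_nonneg t], by linarith [abs_nonneg t]⟩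
      (fun s hs => ⟨hderiv T s (hIoo s hs).1, trivial⟩)
      (fun s hs => ⟨hderiv T' s (hIoo s hs).2, trivial⟩) (by rw [hγ0, hγ0]) (abs_lt.1 hmin)
  refine ⟨fun t => γ (|t| + 1) t, hγ0 _, fun t => ?_⟩
  have heq : (fun s => γ (|s| + 1) s) =ᶠ[𝓝 t] γ (|t| + 1) := by
    filter_upwards [Ioo_mem_nhds (show t - 1 < t by linarith) (show t < t + 1 by linarith)]
      with s hs
    refine hcons _ _ s (by linarith) (abs_lt.2 ⟨?_, ?_⟩) <;>
      linarith [hs.1, hs.2, le_abs_self t, neg_abs_le t]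
  exact (hderiv _ t (by linarith)).congr_of_eventuallyEq heq

variable [CompleteSpace E] {Φ : E → E} {c : ℝ≥0}

theorem LipschitzWith.exists_isIntegralCurveOn_Icc (hΦ : LipschitzWith c Φ) {a : ℝ≥0}
    (hca : c * a ≤ 1 / 2) (t₀ : ℝ) (x₀ : E) :
    ∃ γ : ℝ → E, γ t₀ = x₀ ∧ IsIntegralCurveOn γ (fun _ => Φ) (Icc (t₀ - a) (t₀ + a)) := by
  -- on the ball of radius `2 a ‖Φ x₀‖` the speed is at most `2 ‖Φ x₀‖`, since `c a ≤ 1 / 2`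
  have hpl : IsPicardLindelof (fun _ => Φ) (tmin := t₀ - a) (tmax := t₀ + a)
      ⟨t₀, by simp⟩ x₀ (2 * a * ‖Φ x₀‖₊) 0 (2 * ‖Φ x₀‖₊) c := by
    refine .of_time_independent (fun x hx => ?_) hΦ.lipschitzOnWith ?_
    · have hca' : (c : ℝ) * a ≤ 1 / 2 := by exact_mod_cast hca
      rw [Metric.mem_closedBall, dist_eq_norm] at hx
      push_cast at hx ⊢
      nlinarith [norm_le_insert' (Φ x) (Φ x₀), hΦ.norm_sub_le x x₀,
        mul_le_mul_of_nonneg_left hx c.2, mul_le_mul_of_nonneg_right hca' (norm_nonneg (Φ x₀))]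
    · simp only [add_sub_cancel_left, sub_sub_cancel, max_self, NNReal.coe_zero, sub_zero]
      push_cast
      linarith
  obtain ⟨γ, hγ0, hγ⟩ := hpl.exists_eq_forall_mem_Icc_hasDerivWithinAt₀
  exact ⟨γ, hγ0, hγ⟩

theorem LipschitzWith.exists_isIntegralCurveOn_Icc_nat_mul (hΦ : LipschitzWith c Φ) {a : ℝ≥0}
    (hca : c * a ≤ 1 / 2) (x₀ : E) (n : ℕ) :
    ∃ γ : ℝ → E, γ 0 = x₀ ∧ IsIntegralCurveOn γ (fun _ => Φ) (Icc (-(n * a)) (n * a)) := by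
  induction n with
  | zero =>
    obtain ⟨γ, hγ0, hγ⟩ := hΦ.exists_isIntegralCurveOn_Icc hca 0 x₀
    exact ⟨γ, hγ0, hγ.mono (Icc_subset_Icc (by simp) (by simp))⟩
  | succ n ih =>
    obtain ⟨γ, hγ0, hγ⟩ := ih
    set b : ℝ := n * a
    have hb : 0 ≤ b := by positivity
    obtain ⟨γm, hγm0, hγm⟩ := hΦ.exists_isIntegralCurveOn_Icc hca (-b) (γ (-b))
    obtain ⟨γp, hγp0, hγp⟩ := hΦ.exists_isIntegralCurveOn_Icc hca b (γ b)
    have hleft := (hγm.mono (Icc_subset_Icc le_rfl (by simp))).ite_Icc hγ hγm0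
      (by simp) (by linarith)
    have hleft_eq := eqOn_ite_le_of_eq (γ₁ := γm) (γ₂ := γ) hγm0
    have hright := hleft.ite_Icc (hγp.mono (Icc_subset_Icc (by simp) le_rfl))
      ((hleft_eq (show -b ≤ b by linarith)).trans hγp0.symm) (by linarith) (by simp)
    refine ⟨_, ?_, by convert hright using 2 <;> push_cast <;> ring⟩
    simp only [if_pos hb]
    exact (hleft_eq (show (0 : ℝ) ∈ Ici (-b) by simpa using hb)).trans hγ0

theorem LipschitzWith.exists_isIntegralCurve (hΦ : LipschitzWith c Φ) (x₀ : E) :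
    ∃ γ : ℝ → E, γ 0 = x₀ ∧ IsIntegralCurve γ (fun _ => Φ) := by
  set a : ℝ≥0 := (2 * c + 1)⁻¹
  have ha : 0 < a := by positivity
  have hca : c * a ≤ 1 / 2 := by
    rw [← div_eq_mul_inv, div_le_iff₀ (by positivity), ← NNReal.coe_le_coe]
    push_cast
    linarith
  refine exists_isIntegralCurve_of_forall_isIntegralCurveOn_Icc (fun _ => hΦ) fun T => ?_
  obtain ⟨γ, hγ0, hγ⟩ := hΦ.exists_isIntegralCurveOn_Icc_nat_mul hca x₀ ⌈T / a⌉₊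
  have hT : T ≤ ⌈T / a⌉₊ * a := by
    rw [← div_le_iff₀ (by exact_mod_cast ha)]
    exact Nat.le_ceil _
  exact ⟨γ, hγ0, hγ.mono (Icc_subset_Icc (neg_le_neg hT) hT)⟩

end GlobalExistence

theorem one_add_norm_pos {E : Type*} [SeminormedAddGroup E] (ζ : E) : 0 < 1 + ‖ζ‖ := by
  positivity

namespace BoundedContinuousFunction

variable {α E : Type*} [TopologicalSpace α] [NormedAddCommGroup E] [NormedSpace ℝ E]
  {u g : ℝ → α →ᵇ E}

theorem continuous_of_hasDerivAt_apply (hu : ∀ x t, HasDerivAt (fun s => u s x) (g t x) t)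
    (hg : ∀ T, 0 < T → ∃ C, ∀ t, |t| ≤ T → ‖g t‖ ≤ C) : Continuous u := by
  refine continuous_iff_continuousAt.2 fun t₀ => ?_
  obtain ⟨C, hC⟩ := hg (|t₀| + 1) (by positivity)
  have hmem : ∀ t ∈ Icc (t₀ - 1) (t₀ + 1), |t| ≤ |t₀| + 1 := fun t ht =>
    abs_le.2 ⟨by linarith [ht.1, neg_abs_le t₀], by linarith [ht.2, le_abs_self t₀]⟩
  have hlip : LipschitzOnWith C.toNNReal u (Icc (t₀ - 1) (t₀ + 1)) := by
    refine LipschitzOnWith.of_dist_le_mul fun s hs s' hs' => (dist_le (by positivity)).2 fun x => ?_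
    rw [dist_eq_norm, dist_eq_norm]
    exact (convex_Icc _ _).norm_image_sub_le_of_norm_hasDerivWithin_le
      (fun t _ => (hu x t).hasDerivWithinAt)
      (fun t ht => (norm_coe_le_norm _ _).trans ((hC t (hmem t ht)).trans (le_coe_toNNReal C)))
      hs' hs
  exact hlip.continuousOn.continuousAt (Icc_mem_nhds (by linarith) (by linarith))

theorem hasDerivAt_of_hasDerivAt_apply [CompleteSpace E]
    (hu : ∀ x t, HasDerivAt (fun s => u s x) (g t x) t) (hg : Continuous g) (t : ℝ) :
    HasDerivAt u (g t) t := by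
  have hftc : ∀ t, u t = u 0 + ∫ r in (0 : ℝ)..t, g r := by
    intro t
    ext x
    have hcomm := (evalCLM ℝ x).intervalIntegral_comp_comm (hg.intervalIntegrable (μ := volume) 0 t)
    simp only [evalCLM_apply] at hcomm
    rw [coe_add, Pi.add_apply, ← hcomm, intervalIntegral.integral_eq_sub_of_hasDerivAt
      (fun r _ => hu x r) (((continuous_eval_const x).comp hg).intervalIntegrable 0 t)]
    abel
  exact ((hg.integral_hasStrictDerivAt 0 t).hasDerivAt.const_add (u 0)).congr_of_eventuallyEq
    (Eventually.of_forall hftc)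

theorem exists_apply_eq_inv_one_add_norm_smul {β : Type*} [SeminormedAddGroup β] {f : β → E}
    (hf : Continuous f) {C : ℝ} (hC : ∀ ζ, ‖f ζ‖ ≤ C * (1 + ‖ζ‖)) :
    ∃ u : β →ᵇ E, ∀ ζ, u ζ = (1 + ‖ζ‖)⁻¹ • f ζ := by
  refine ⟨.ofNormedAddCommGroup (fun ζ => (1 + ‖ζ‖)⁻¹ • f ζ)
    (((continuous_const.add continuous_norm).inv₀ fun ζ => (one_add_norm_pos ζ).ne').smul hf)
    C fun ζ => ?_, fun _ => rfl⟩
  rw [norm_smul, norm_inv, norm_of_nonneg (one_add_norm_pos ζ).le,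
    inv_mul_le_iff₀ (one_add_norm_pos ζ), mul_comm]
  exact hC ζ

end BoundedContinuousFunction

section Displacement

variable {E : Type*} [NormedAddCommGroup E] [NormedSpace ℝ E]

def displacementMap (v : E →ᵇ E) (ζ : E) : E := ζ + (1 + ‖ζ‖) • v ζ

theorem continuous_displacementMap (v : E →ᵇ E) : Continuous (displacementMap v) :=
  continuous_id.add ((continuous_const.add continuous_norm).smul v.continuous)

theorem continuous_uncurry_displacementMap {v : ℝ → E →ᵇ E} (hv : Continuous v) :
    Continuous (Function.uncurry fun t => displacementMap (v t)) :=
  continuous_snd.add ((continuous_const.add (continuous_norm.comp continuous_snd)).smul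
    (continuous_eval.comp ((hv.comp continuous_fst).prodMk continuous_snd)))

@[simp]
theorem displacementMap_zero : displacementMap (0 : E →ᵇ E) = id := by
  ext ζ
  simp [displacementMap]

theorem norm_displacementMap_le (v : E →ᵇ E) (ζ : E) :
    ‖displacementMap v ζ‖ ≤ (1 + ‖v‖) * (1 + ‖ζ‖) := by
  have hvζ := v.norm_coe_le_norm ζ
  calc ‖displacementMap v ζ‖ ≤ ‖ζ‖ + (1 + ‖ζ‖) * ‖v ζ‖ := (norm_add_le _ _).trans_eq <| by
        rw [norm_smul, norm_of_nonneg (one_add_norm_pos ζ).le]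
    _ ≤ (1 + ‖v‖) * (1 + ‖ζ‖) := by nlinarith [norm_nonneg ζ]

theorem norm_displacementMap_sub_le (v w : E →ᵇ E) (ζ : E) :
    ‖displacementMap v ζ - displacementMap w ζ‖ ≤ ‖v - w‖ * (1 + ‖ζ‖) := by
  rw [displacementMap, displacementMap, add_sub_add_left_eq_sub, ← smul_sub, norm_smul,
    norm_of_nonneg (one_add_norm_pos ζ).le, mul_comm, ← BoundedContinuousFunction.sub_apply]
  gcongr
  exact (v - w).norm_coe_le_norm ζ

theorem apply_eq_of_displacementMap_eq {v : E →ᵇ E} {W : E → E} (h : displacementMap v = W)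
    (ζ : E) : v ζ = (1 + ‖ζ‖)⁻¹ • (W ζ - ζ) := by
  rw [← h, displacementMap, add_sub_cancel_left, inv_smul_smul₀ (one_add_norm_pos ζ).ne']

theorem displacementMap_injective : Function.Injective (displacementMap (E := E)) :=
  fun _ _ h => ext fun ζ => by
    rw [apply_eq_of_displacementMap_eq h, apply_eq_of_displacementMap_eq rfl]

theorem exists_displacementMap_eq {W : E → E} (hW : Continuous W) {C : ℝ}
    (hC : ∀ ζ, ‖W ζ‖ ≤ C * (1 + ‖ζ‖)) : ∃ v : E →ᵇ E, displacementMap v = W := by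
  obtain ⟨v, hv⟩ := exists_apply_eq_inv_one_add_norm_smul (f := fun ζ => W ζ - ζ)
    (hW.sub continuous_id) (C := C + 1) fun ζ => by linarith [norm_sub_le (W ζ) ζ, hC ζ]
  refine ⟨v, funext fun ζ => ?_⟩
  rw [displacementMap, hv, smul_inv_smul₀ (one_add_norm_pos ζ).ne', add_sub_cancel]

theorem norm_le_of_norm_displacementMap_le {v : E →ᵇ E} {C : ℝ}
    (hC : ∀ ζ, ‖displacementMap v ζ‖ ≤ C * (1 + ‖ζ‖)) : ‖v‖ ≤ C + 1 := by
  have hvζ : ∀ ζ, ‖v ζ‖ ≤ C + 1 := fun ζ => by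
    rw [apply_eq_of_displacementMap_eq rfl ζ, norm_smul, norm_inv,
      norm_of_nonneg (one_add_norm_pos ζ).le, inv_mul_le_iff₀ (one_add_norm_pos ζ)]
    linarith [norm_sub_le (displacementMap v ζ) ζ, hC ζ]
  exact (norm_le ((norm_nonneg _).trans (hvζ 0))).2 hvζ

theorem hasDerivAt_displacementMap_apply {v : ℝ → E →ᵇ E} {v' : E →ᵇ E} {t : ℝ}
    (hv : HasDerivAt v v' t) (ζ : E) :
    HasDerivAt (fun s => displacementMap (v s) ζ) ((1 + ‖ζ‖) • v' ζ) t :=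
  ((((BoundedContinuousFunction.evalCLM ℝ ζ).hasFDerivAt.comp_hasDerivAt t hv)).const_smul
    (1 + ‖ζ‖)).const_add ζ

end Displacement

theorem lipschitzWith_toNNReal_of_norm_fderiv_le {E F : Type*} [NormedAddCommGroup E]
    [NormedSpace ℝ E] [NormedAddCommGroup F] [NormedSpace ℝ F] {f : E → F} {C : ℝ}
    (hf : Differentiable ℝ f) (h : ∀ x, ‖fderiv ℝ f x‖ ≤ C) : LipschitzWith C.toNNReal f :=
  lipschitzWith_of_nnnorm_fderiv_le hf fun x => by
    simpa [← norm_toNNReal] using Real.toNNReal_le_toNNReal (h x)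

section Kernel

variable {E F : Type*} [SeminormedAddCommGroup E] [SeminormedAddCommGroup F] {K : E × E → F}
  {L : ℝ≥0}

theorem norm_kernel_sub_le (hK₁ : ∀ z', LipschitzWith L fun z => K (z, z'))
    (hK₂ : ∀ z, LipschitzWith L fun z' => K (z, z')) (y y' b b' : E) :
    ‖K (y, b) - K (y', b')‖ ≤ L * (‖y - y'‖ + ‖b - b'‖) :=
  calc ‖K (y, b) - K (y', b')‖ ≤ ‖K (y, b) - K (y', b)‖ + ‖K (y', b) - K (y', b')‖ :=
        norm_sub_le_norm_sub_add_norm_sub _ _ _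
    _ ≤ L * ‖y - y'‖ + L * ‖b - b'‖ :=
        add_le_add ((hK₁ b).norm_sub_le y y') ((hK₂ y').norm_sub_le b b')
    _ = L * (‖y - y'‖ + ‖b - b'‖) := by ring

theorem norm_kernel_le (hK₁ : ∀ z', LipschitzWith L fun z => K (z, z'))
    (hK₂ : ∀ z, LipschitzWith L fun z' => K (z, z')) (y b : E) :
    ‖K (y, b)‖ ≤ ‖K 0‖ + L * (‖y‖ + ‖b‖) := by
  have h := norm_kernel_sub_le hK₁ hK₂ y 0 b 0
  rw [sub_zero, sub_zero, ← Prod.zero_eq_mk] at h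
  linarith [norm_le_insert' (K (y, b)) (K 0)]

end Kernel

section WeightedIntegral

variable {E : Type*} [NormedAddCommGroup E] [MeasurableSpace E] {μ : Measure E}

theorem integrable_of_norm_le_mul_one_add_norm {F : Type*} [NormedAddCommGroup F] {f : E → F}
    (hμ : Integrable (fun z => 1 + ‖z‖) μ) (hf : AEStronglyMeasurable f μ) {A : ℝ}
    (h : ∀ z, ‖f z‖ ≤ A * (1 + ‖z‖)) : Integrable f μ :=
  (hμ.const_mul A).mono' hf (ae_of_all _ h)

theorem norm_integral_le_of_norm_le_mul_one_add_norm {F : Type*} [NormedAddCommGroup F]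
    [NormedSpace ℝ F] {f : E → F} (hμ : Integrable (fun z => 1 + ‖z‖) μ) {A : ℝ}
    (h : ∀ z, ‖f z‖ ≤ A * (1 + ‖z‖)) : ‖∫ z, f z ∂μ‖ ≤ A * ∫ z, (1 + ‖z‖) ∂μ :=
  (norm_integral_le_of_norm_le (hμ.const_mul A) (ae_of_all _ h)).trans_eq
    (integral_const_mul A _)

end WeightedIntegral

section MeanField

variable {E : Type*} [NormedAddCommGroup E] [NormedSpace ℝ E] {K : E × E → E} {L : ℝ≥0}

theorem add_le_two_mul_mul_of_nonneg {a b : ℝ} (ha : 0 ≤ a) (hb : 0 ≤ b) :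
    (1 + a) + (1 + b) ≤ 2 * ((1 + a) * (1 + b)) := by
  nlinarith [mul_nonneg ha hb]

theorem norm_kernel_displacementMap_le (hK₁ : ∀ z', LipschitzWith L fun z => K (z, z'))
    (hK₂ : ∀ z, LipschitzWith L fun z' => K (z, z')) (v : E →ᵇ E) (ζ z' : E) :
    ‖K (displacementMap v ζ, displacementMap v z')‖ ≤
      (‖K 0‖ + 2 * L * (1 + ‖v‖)) * ((1 + ‖ζ‖) * (1 + ‖z'‖)) := by
  have hsum := add_le_two_mul_mul_of_nonneg (norm_nonneg ζ) (norm_nonneg z')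
  have hone : 1 ≤ (1 + ‖ζ‖) * (1 + ‖z'‖) := by nlinarith [norm_nonneg ζ, norm_nonneg z']
  calc ‖K (displacementMap v ζ, displacementMap v z')‖
      ≤ ‖K 0‖ + L * (‖displacementMap v ζ‖ + ‖displacementMap v z'‖) := norm_kernel_le hK₁ hK₂ _ _
    _ ≤ ‖K 0‖ * ((1 + ‖ζ‖) * (1 + ‖z'‖)) + L * ((1 + ‖v‖) * ((1 + ‖ζ‖) + (1 + ‖z'‖))) := by
        gcongr
        · exact le_mul_of_one_le_right (norm_nonneg _) hone
        · linarith [norm_displacementMap_le v ζ, norm_displacementMap_le v z']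
    _ ≤ ‖K 0‖ * ((1 + ‖ζ‖) * (1 + ‖z'‖)) + L * ((1 + ‖v‖) * (2 * ((1 + ‖ζ‖) * (1 + ‖z'‖)))) := by
        gcongr
    _ = _ := by ring

theorem norm_kernel_displacementMap_sub_le (hK₁ : ∀ z', LipschitzWith L fun z => K (z, z'))
    (hK₂ : ∀ z, LipschitzWith L fun z' => K (z, z')) (v w : E →ᵇ E) (ζ z' : E) :
    ‖K (displacementMap v ζ, displacementMap v z') - K (displacementMap w ζ, displacementMap w z')‖
      ≤ 2 * L * ‖v - w‖ * ((1 + ‖ζ‖) * (1 + ‖z'‖)) := by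
  have hsum := add_le_two_mul_mul_of_nonneg (norm_nonneg ζ) (norm_nonneg z')
  calc _ ≤ L * (‖v - w‖ * (1 + ‖ζ‖) + ‖v - w‖ * (1 + ‖z'‖)) :=
        (norm_kernel_sub_le hK₁ hK₂ _ _ _ _).trans (by
          gcongr <;> exact norm_displacementMap_sub_le v w _)
    _ = L * ‖v - w‖ * ((1 + ‖ζ‖) + (1 + ‖z'‖)) := by ring
    _ ≤ L * ‖v - w‖ * (2 * ((1 + ‖ζ‖) * (1 + ‖z'‖))) := by gcongr
    _ = _ := by ring

variable [MeasurableSpace E] [BorelSpace E] [SecondCountableTopology E] {μ : Measure E}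

theorem integrable_kernel_displacementMap (hK₂ : ∀ z, LipschitzWith L fun z' => K (z, z'))
    (hμ : Integrable (fun z => 1 + ‖z‖) μ) (y : E) (v : E →ᵇ E) :
    Integrable (fun z' => K (y, displacementMap v z')) μ := by
  refine integrable_of_norm_le_mul_one_add_norm hμ
    ((hK₂ y).continuous.comp (continuous_displacementMap v)).aestronglyMeasurable
    (A := ‖K (y, 0)‖ + L * (1 + ‖v‖)) fun z' => ?_
  have hK := (hK₂ y).norm_sub_le (displacementMap v z') 0
  rw [sub_zero] at hK
  nlinarith [norm_le_insert' (K (y, displacementMap v z')) (K (y, 0)),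
    norm_displacementMap_le v z', norm_nonneg z', norm_nonneg (K (y, 0))]

theorem continuous_integral_kernel_displacementMap
    (hK₁ : ∀ z', LipschitzWith L fun z => K (z, z'))
    (hK₂ : ∀ z, LipschitzWith L fun z' => K (z, z')) (hμ : Integrable (fun z => 1 + ‖z‖) μ)
    (v : E →ᵇ E) :
    Continuous fun ζ => ∫ z', K (displacementMap v ζ, displacementMap v z') ∂μ := by
  have hlip : LipschitzWith (L * (∫ z, (1 + ‖z‖) ∂μ).toNNReal)
      fun y => ∫ z', K (y, displacementMap v z') ∂μ := by
    refine .of_dist_le_mul fun y y' => ?_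
    rw [dist_eq_norm, dist_eq_norm, ← integral_sub (integrable_kernel_displacementMap hK₂ hμ y v)
      (integrable_kernel_displacementMap hK₂ hμ y' v), NNReal.coe_mul,
      coe_toNNReal _ (integral_nonneg fun z => (one_add_norm_pos z).le), mul_right_comm]
    refine norm_integral_le_of_norm_le_mul_one_add_norm hμ fun z' =>
      ((hK₁ _).norm_sub_le y y').trans (le_mul_of_one_le_right (by positivity) ?_)
    linarith [norm_nonneg z']
  exact hlip.continuous.comp (continuous_displacementMap v)

-- The junk value `0` is never taken under the hypotheses of `meanFieldField_apply`.
open scoped Classical in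
def meanFieldField (K : E × E → E) (μ : Measure E) (v : E →ᵇ E) : E →ᵇ E :=
  if h : ∃ u : E →ᵇ E, ∀ ζ,
      u ζ = (1 + ‖ζ‖)⁻¹ • ∫ z', K (displacementMap v ζ, displacementMap v z') ∂μ then
    h.choose
  else 0

theorem meanFieldField_apply (hK₁ : ∀ z', LipschitzWith L fun z => K (z, z'))
    (hK₂ : ∀ z, LipschitzWith L fun z' => K (z, z')) (hμ : Integrable (fun z => 1 + ‖z‖) μ)
    (v : E →ᵇ E) (ζ : E) :
    meanFieldField K μ v ζ =
      (1 + ‖ζ‖)⁻¹ • ∫ z', K (displacementMap v ζ, displacementMap v z') ∂μ := by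
  have h : ∃ u : E →ᵇ E, ∀ ζ,
      u ζ = (1 + ‖ζ‖)⁻¹ • ∫ z', K (displacementMap v ζ, displacementMap v z') ∂μ :=
    exists_apply_eq_inv_one_add_norm_smul
      (continuous_integral_kernel_displacementMap hK₁ hK₂ hμ v)
      (C := (‖K 0‖ + 2 * L * (1 + ‖v‖)) * ∫ z, (1 + ‖z‖) ∂μ) fun ζ => by
        rw [mul_right_comm]
        exact norm_integral_le_of_norm_le_mul_one_add_norm hμ fun z' => by
          rw [mul_assoc]; exact norm_kernel_displacementMap_le hK₁ hK₂ v ζ z'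
  rw [meanFieldField, dif_pos h]
  exact h.choose_spec ζ

theorem lipschitzWith_meanFieldField (hK₁ : ∀ z', LipschitzWith L fun z => K (z, z'))
    (hK₂ : ∀ z, LipschitzWith L fun z' => K (z, z')) (hμ : Integrable (fun z => 1 + ‖z‖) μ) :
    LipschitzWith (2 * L * (∫ z, (1 + ‖z‖) ∂μ).toNNReal) (meanFieldField K μ) := by
  have hM : 0 ≤ ∫ z, (1 + ‖z‖) ∂μ := integral_nonneg fun z => (one_add_norm_pos z).le
  refine .of_dist_le_mul fun v w => (dist_le (by positivity)).2 fun ζ => ?_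
  rw [dist_eq_norm, dist_eq_norm, meanFieldField_apply hK₁ hK₂ hμ,
    meanFieldField_apply hK₁ hK₂ hμ, ← smul_sub, ← integral_sub
    (integrable_kernel_displacementMap hK₂ hμ _ v) (integrable_kernel_displacementMap hK₂ hμ _ w),
    norm_smul, norm_inv, norm_of_nonneg (one_add_norm_pos ζ).le, inv_mul_le_iff₀
    (one_add_norm_pos ζ)]
  push_cast
  rw [coe_toNNReal _ hM]
  calc _ ≤ 2 * L * ‖v - w‖ * (1 + ‖ζ‖) * ∫ z, (1 + ‖z‖) ∂μ :=
        norm_integral_le_of_norm_le_mul_one_add_norm hμ fun z' => by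
          rw [mul_assoc _ (1 + ‖ζ‖)]; exact norm_kernel_displacementMap_sub_le hK₁ hK₂ v w ζ z'
    _ = _ := by ring

theorem one_add_norm_smul_meanFieldField_apply (hK₁ : ∀ z', LipschitzWith L fun z => K (z, z'))
    (hK₂ : ∀ z, LipschitzWith L fun z' => K (z, z')) (hμ : Integrable (fun z => 1 + ‖z‖) μ)
    (v : E →ᵇ E) (ζ : E) :
    (1 + ‖ζ‖) • meanFieldField K μ v ζ =
      ∫ z', K (displacementMap v ζ, z') ∂(μ.map (displacementMap v)) := by
  rw [meanFieldField_apply hK₁ hK₂ hμ, smul_inv_smul₀ (one_add_norm_pos ζ).ne',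
    integral_map (continuous_displacementMap v).aemeasurable
      (hK₂ _).continuous.aestronglyMeasurable]

end MeanField

section MeanFieldFlow

variable {E : Type*} [NormedAddCommGroup E] [NormedSpace ℝ E] [MeasurableSpace E] [BorelSpace E]
  [SecondCountableTopology E] {K : E × E → E} {L : ℝ≥0} {μ : Measure E}

def IsMeanFieldFlow (K : E × E → E) (μ : Measure E) (Z : ℝ → E → E) : Prop :=
  Continuous (Function.uncurry Z) ∧
    (∀ T : ℝ, 0 < T → ∃ C : ℝ, ∀ t : ℝ, |t| ≤ T → ∀ ζ, ‖Z t ζ‖ ≤ C * (1 + ‖ζ‖)) ∧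
    (∀ ζ, Z 0 ζ = ζ) ∧
    (∀ ζ t, HasDerivAt (fun s => Z s ζ) (∫ z', K (Z t ζ, z') ∂(Measure.map (Z t) μ)) t)

theorem isMeanFieldFlow_displacementMap (hK₁ : ∀ z', LipschitzWith L fun z => K (z, z'))
    (hK₂ : ∀ z, LipschitzWith L fun z' => K (z, z')) (hμ : Integrable (fun z => 1 + ‖z‖) μ)
    {v : ℝ → E →ᵇ E} (hv0 : v 0 = 0) (hv : IsIntegralCurve v fun _ => meanFieldField K μ) :
    IsMeanFieldFlow K μ fun t => displacementMap (v t) := by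
  refine ⟨continuous_uncurry_displacementMap hv.continuous, fun T _ => ?_,
    fun ζ => by simp [hv0], fun ζ t => ?_⟩
  · obtain ⟨C, hC⟩ := (isCompact_Icc (a := -T) (b := T)).exists_bound_of_continuousOn
      hv.continuous.continuousOn
    refine ⟨1 + C, fun t ht ζ => (norm_displacementMap_le _ _).trans ?_⟩
    gcongr
    exact hC t (abs_le.1 ht)
  · rw [← one_add_norm_smul_meanFieldField_apply hK₁ hK₂ hμ]
    exact hasDerivAt_displacementMap_apply (hv t) ζ

variable [CompleteSpace E]

theorem IsMeanFieldFlow.exists_isIntegralCurve (hK₁ : ∀ z', LipschitzWith L fun z => K (z, z'))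
    (hK₂ : ∀ z, LipschitzWith L fun z' => K (z, z')) (hμ : Integrable (fun z => 1 + ‖z‖) μ)
    {Z : ℝ → E → E} (hZ : IsMeanFieldFlow K μ Z) :
    ∃ v : ℝ → E →ᵇ E, v 0 = 0 ∧ IsIntegralCurve v (fun _ => meanFieldField K μ) ∧
      Z = fun t => displacementMap (v t) := by
  obtain ⟨hcont, hgrowth, hinit, hderiv⟩ := hZ
  choose v hv using fun t => (hgrowth (|t| + 1) (by positivity)).elim fun C hC =>
    exists_displacementMap_eq (W := Z t) (hcont.comp (Continuous.prodMk_right t))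
      (hC t (by linarith))
  have hv_apply (t : ℝ) (ζ : E) : v t ζ = (1 + ‖ζ‖)⁻¹ • (Z t ζ - ζ) :=
    apply_eq_of_displacementMap_eq (hv t) ζ
  set Φ := meanFieldField K μ
  set c := 2 * L * (∫ z, (1 + ‖z‖) ∂μ).toNNReal
  have hΦ : LipschitzWith c Φ := lipschitzWith_meanFieldField hK₁ hK₂ hμ
  have hv_deriv_apply (ζ : E) (t : ℝ) : HasDerivAt (fun s => v s ζ) (Φ (v t) ζ) t := by
    have h : HasDerivAt (fun s => (1 + ‖ζ‖)⁻¹ • (Z s ζ - ζ))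
        ((1 + ‖ζ‖)⁻¹ • ∫ z', K (Z t ζ, z') ∂(μ.map (Z t))) t :=
      ((hderiv ζ t).sub_const ζ).const_smul _
    rw [← hv t, ← one_add_norm_smul_meanFieldField_apply hK₁ hK₂ hμ,
      inv_smul_smul₀ (one_add_norm_pos ζ).ne'] at h
    exact h.congr_of_eventuallyEq (Eventually.of_forall fun s => hv_apply s ζ)
  have hΦv_bdd : ∀ T, 0 < T → ∃ C, ∀ t, |t| ≤ T → ‖Φ (v t)‖ ≤ C := by
    intro T hT
    obtain ⟨C, hC⟩ := hgrowth T hT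
    refine ⟨‖Φ 0‖ + c * (C + 1), fun t ht => ?_⟩
    have hvt : ‖v t‖ ≤ C + 1 := norm_le_of_norm_displacementMap_le (by rw [hv t]; exact hC t ht)
    calc ‖Φ (v t)‖ ≤ ‖Φ 0‖ + ‖Φ (v t) - Φ 0‖ := norm_le_insert' _ _
      _ ≤ ‖Φ 0‖ + c * ‖v t‖ := by simpa using hΦ.norm_sub_le (v t) 0
      _ ≤ ‖Φ 0‖ + c * (C + 1) := by gcongr
  have hvc := continuous_of_hasDerivAt_apply hv_deriv_apply hΦv_bdd
  refine ⟨v, displacementMap_injective ?_, fun t =>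
    hasDerivAt_of_hasDerivAt_apply hv_deriv_apply (hΦ.continuous.comp hvc) t,
    funext fun t => (hv t).symm⟩
  rw [hv 0, displacementMap_zero]
  exact funext hinit

theorem existsUnique_isMeanFieldFlow (hK₁ : ∀ z', LipschitzWith L fun z => K (z, z'))
    (hK₂ : ∀ z, LipschitzWith L fun z' => K (z, z')) (hμ : Integrable (fun z => 1 + ‖z‖) μ) :
    ∃! Z, IsMeanFieldFlow K μ Z := by
  have hΦ := lipschitzWith_meanFieldField hK₁ hK₂ hμ
  obtain ⟨v, hv0, hv⟩ := hΦ.exists_isIntegralCurve 0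
  refine ⟨_, isMeanFieldFlow_displacementMap hK₁ hK₂ hμ hv0 hv, fun Z hZ => ?_⟩
  obtain ⟨w, hw0, hw, rfl⟩ := hZ.exists_isIntegralCurve hK₁ hK₂ hμ
  rw [ODE_solution_unique_univ (s := fun _ => univ) (fun _ => hΦ.lipschitzOnWith)
    (fun t => ⟨hw t, trivial⟩) (fun t => ⟨hv t, trivial⟩) (hw0.trans hv0.symm)]

end MeanFieldFlow

end

theorem stmt2_general (d : ℕ) (L : ℝ)
    (K : EuclideanSpace ℝ (Fin d) × EuclideanSpace ℝ (Fin d) → EuclideanSpace ℝ (Fin d))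
    (hK : ContDiff ℝ 1 K)
    (hK2 : (∀ z z' : EuclideanSpace ℝ (Fin d), ‖fderiv ℝ (fun w => K (w, z')) z‖ ≤ L) ∧
           (∀ z z' : EuclideanSpace ℝ (Fin d), ‖fderiv ℝ (fun w => K (z, w)) z'‖ ≤ L))
    (μin : Measure (EuclideanSpace ℝ (Fin d))) [IsProbabilityMeasure μin]
    (hmom : ∫⁻ z, (‖z‖₊ : ℝ≥0∞) ∂μin ≠ ⊤) :
    ∃! Z : ℝ → EuclideanSpace ℝ (Fin d) → EuclideanSpace ℝ (Fin d),
      Continuous (Function.uncurry Z) ∧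
      (∀ T : ℝ, 0 < T → ∃ C : ℝ, ∀ t : ℝ, |t| ≤ T → ∀ ζ, ‖Z t ζ‖ ≤ C * (1 + ‖ζ‖)) ∧
      (∀ ζ, Z 0 ζ = ζ) ∧
      (∀ ζ t, HasDerivAt (fun s => Z s ζ)
        (∫ z', K (Z t ζ, z') ∂(Measure.map (Z t) μin)) t) := by
  have hKd : Differentiable ℝ K := hK.differentiable one_ne_zero
  have hK₁ (z' : EuclideanSpace ℝ (Fin d)) : LipschitzWith L.toNNReal fun z => K (z, z') :=
    lipschitzWith_toNNReal_of_norm_fderiv_le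
      (hKd.comp (differentiable_id.prodMk (differentiable_const z'))) fun z => hK2.1 z z'
  have hK₂ (z : EuclideanSpace ℝ (Fin d)) : LipschitzWith L.toNNReal fun z' => K (z, z') :=
    lipschitzWith_toNNReal_of_norm_fderiv_le
      (hKd.comp ((differentiable_const z).prodMk differentiable_id)) fun z' => hK2.2 z z'
  have hμ : Integrable (fun z => 1 + ‖z‖) μin :=
    (integrable_const 1).add ⟨continuous_norm.aestronglyMeasurable, by
      simpa [HasFiniteIntegral, enorm] using hmom.lt_top⟩
  exact existsUnique_isMeanFieldFlow hK₁ hK₂ hμ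

/-- existence and uniqueness of the mean field characteristic flow:
for every Borel probability measure `μin` on `ℝ^d` with finite first moment there
is a unique `Z : ℝ × ℝ^d → ℝ^d`, jointly continuous, with at most linear growth in
the second variable locally uniformly in time, such that for every `ζ`,
`t ↦ Z t ζ` is `C¹`, `Z 0 ζ = ζ` and
`∂ₜ Z t ζ = ∫ K (Z t ζ, z') d(Z(t,·)#μin)(z')`. -/
theorem stmt2 (d : ℕ) (L : ℝ) (hL : 0 ≤ L)
    (K : EuclideanSpace ℝ (Fin d) × EuclideanSpace ℝ (Fin d) → EuclideanSpace ℝ (Fin d))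
    (hK : ContDiff ℝ 1 K)
    (hK1 : ∀ z z' : EuclideanSpace ℝ (Fin d), K (z, z') = - K (z', z))
    (hK2 : (∀ z z' : EuclideanSpace ℝ (Fin d), ‖fderiv ℝ (fun w => K (w, z')) z‖ ≤ L) ∧
           (∀ z z' : EuclideanSpace ℝ (Fin d), ‖fderiv ℝ (fun w => K (z, w)) z'‖ ≤ L))
    (μin : Measure (EuclideanSpace ℝ (Fin d))) [IsProbabilityMeasure μin]
    (hmom : ∫⁻ z, (‖z‖₊ : ℝ≥0∞) ∂μin ≠ ⊤) :
    ∃! Z : ℝ → EuclideanSpace ℝ (Fin d) → EuclideanSpace ℝ (Fin d),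
      Continuous (Function.uncurry Z) ∧
      (∀ T : ℝ, 0 < T → ∃ C : ℝ, ∀ t : ℝ, |t| ≤ T → ∀ ζ, ‖Z t ζ‖ ≤ C * (1 + ‖ζ‖)) ∧
      (∀ ζ, Z 0 ζ = ζ) ∧
      (∀ ζ t, HasDerivAt (fun s => Z s ζ)
        (∫ z', K (Z t ζ, z') ∂(Measure.map (Z t) μin)) t) :=
  stmt2_general d L K hK hK2 μin hmom
end

section
/- Assume the interaction kernel K satisfies (HK1)-(HK2). For each Z_N^in = (z_1^in,…,z_N^in) ∈ (ℝ^d)^N, the solution T_t Z_N^in = (z_1(t),…,z_N(t)) of the N-particle ODE system and the mean field characteristic flow Z satisfy z_i(t) = Z(t, z_i^in, μ_{Z_N^in}) for all i = 1,…,N and all t ∈ ℝ. -/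
open MeasureTheory Real Filter Topology
open scoped ENNReal NNReal

noncomputable section

/-- The empirical measure of an `N`-tuple of points in `ℝ^d`. -/
def empiricalMeasure {d N : ℕ} (z : Fin N → EuclideanSpace ℝ (Fin d)) :
    Measure (EuclideanSpace ℝ (Fin d)) :=
  (N : ℝ≥0∞)⁻¹ • ∑ j : Fin N, Measure.dirac (z j)

/-!
Both `t ↦ (zᵢ(t))ᵢ` and `t ↦ (Z(t, zᵢ^in, μ_{Zin}))ᵢ` solve the same autonomous ODE on `(ℝ^d)^N`
with initial value `Zin`: the pushforward of an empirical measure is again empirical, so the mean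
field velocity along it is the average `N⁻¹ ∑ⱼ K(·, zⱼ)`. This velocity field is `C¹`, hence
locally Lipschitz, and solutions of a locally Lipschitz ODE are unique.
-/

open Set

section

variable {E : Type*} [NormedAddCommGroup E] [NormedSpace ℝ E]

/-- Over a time window, both trajectories stay in a compact set, on which `v` is Lipschitz. -/
theorem ODE_solution_unique_univ_of_locallyLipschitz {v : E → E} (hv : LocallyLipschitz v)
    {f g : ℝ → E} {t₀ : ℝ} (hf : ∀ t, HasDerivAt f (v (f t)) t)
    (hg : ∀ t, HasDerivAt g (v (g t)) t) (heq : f t₀ = g t₀) : f = g := by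
  ext t
  obtain ⟨a, b, ht, ht₀⟩ : ∃ a b, t ∈ Ioo a b ∧ t₀ ∈ Ioo a b :=
    ⟨min t t₀ - 1, max t t₀ + 1, by constructor <;> constructor <;> grind⟩
  set s := f '' Icc a b ∪ g '' Icc a b
  have hs : IsCompact s :=
    (isCompact_Icc.image_of_continuousOn fun t _ => (hf t).continuousAt.continuousWithinAt).union
      (isCompact_Icc.image_of_continuousOn fun t _ => (hg t).continuousAt.continuousWithinAt)
  obtain ⟨K, hK⟩ := hv.locallyLipschitzOn.exists_lipschitzOnWith_of_compact hs
  exact ODE_solution_unique_of_mem_Ioo (v := fun _ => v) (s := fun _ => s) (fun _ _ => hK) ht₀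
    (fun t ht => ⟨hf t, Or.inl ⟨t, Ioo_subset_Icc_self ht, rfl⟩⟩)
    (fun t ht => ⟨hg t, Or.inr ⟨t, Ioo_subset_Icc_self ht, rfl⟩⟩) heq ht

def meanFieldVelocity {N : ℕ} (K : E × E → E) (x : Fin N → E) : Fin N → E :=
  fun i => (N : ℝ)⁻¹ • ∑ j, K (x i, x j)

theorem contDiff_meanFieldVelocity {N : ℕ} {n : WithTop ℕ∞} {K : E × E → E}
    (hK : ContDiff ℝ n K) : ContDiff ℝ n (meanFieldVelocity (N := N) K) := by
  refine contDiff_pi.2 fun i => (ContDiff.sum fun j _ => ?_).const_smul _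
  exact hK.comp ((contDiff_apply ℝ E i).prodMk (contDiff_apply ℝ E j))

end

theorem map_empiricalMeasure {d N : ℕ} (z : Fin N → EuclideanSpace ℝ (Fin d))
    (φ : EuclideanSpace ℝ (Fin d) → EuclideanSpace ℝ (Fin d)) :
    (empiricalMeasure z).map φ = empiricalMeasure (φ ∘ z) := by
  have hφ : AEMeasurable φ (∑ j, Measure.dirac (z j)) := by
    rw [← Measure.sum_fintype]
    exact aemeasurable_sum_measure_iff.2 fun _ => aemeasurable_dirac
  simp only [empiricalMeasure, Measure.map_smul, Measure.map_finset_sum' hφ, Measure.map_dirac,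
    Function.comp_apply]

theorem integral_empiricalMeasure {d N : ℕ} {F : Type*} [NormedAddCommGroup F] [NormedSpace ℝ F]
    [CompleteSpace F] (z : Fin N → EuclideanSpace ℝ (Fin d)) (f : EuclideanSpace ℝ (Fin d) → F) :
    ∫ x, f x ∂(empiricalMeasure z) = (N : ℝ)⁻¹ • ∑ j, f (z j) := by
  rw [empiricalMeasure, integral_smul_measure,
    integral_finsetSum_measure fun j _ => integrable_dirac enorm_lt_top]
  simp only [integral_dirac, ENNReal.toReal_inv, ENNReal.toReal_natCast]

theorem stmt3_general (d : ℕ)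
    (K : EuclideanSpace ℝ (Fin d) × EuclideanSpace ℝ (Fin d) → EuclideanSpace ℝ (Fin d))
    (hK : ContDiff ℝ 1 K)
    (N : ℕ) (Zin : Fin N → EuclideanSpace ℝ (Fin d))
    -- the solution of the N-particle ODE system with initial data Zin
    (ZN : ℝ → Fin N → EuclideanSpace ℝ (Fin d))
    (hZN0 : ZN 0 = Zin)
    (hZNode : ∀ t : ℝ,
      HasDerivAt ZN (fun i => (N : ℝ)⁻¹ • ∑ j : Fin N, K (ZN t i, ZN t j)) t)
    -- the mean field characteristic flow with initial measure μ_{Zin}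
    (Zc : ℝ → EuclideanSpace ℝ (Fin d) → EuclideanSpace ℝ (Fin d))
    (hZc0 : ∀ ζ, Zc 0 ζ = ζ)
    (hZcode : ∀ ζ t, HasDerivAt (fun s => Zc s ζ)
      (∫ z', K (Zc t ζ, z') ∂(Measure.map (Zc t) (empiricalMeasure Zin))) t) :
    ∀ t : ℝ, ∀ i : Fin N, ZN t i = Zc t (Zin i) := by
  have hZc : ∀ t, HasDerivAt (fun s i => Zc s (Zin i))
      (meanFieldVelocity K fun i => Zc t (Zin i)) t := fun t =>
    hasDerivAt_pi.2 fun i => by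
      simpa only [map_empiricalMeasure, integral_empiricalMeasure, Function.comp_apply,
        meanFieldVelocity] using hZcode (Zin i) t
  have h0 : ZN 0 = fun i => Zc 0 (Zin i) := by simp only [hZN0, hZc0]
  have hsame := ODE_solution_unique_univ_of_locallyLipschitz
    (contDiff_meanFieldVelocity hK).locallyLipschitz hZNode hZc h0
  exact fun t i => congrFun (congrFun hsame t) i

/-- the solution of the `N`-particle ODE system with initial data
`Zin` coincides with the mean field characteristic flow along the empirical
measure of the initial data: `zᵢ(t) = Z(t, zᵢ^in, μ_{Zin})`. -/
theorem stmt3 (d : ℕ) (L : ℝ) (hL : 0 ≤ L)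
    (K : EuclideanSpace ℝ (Fin d) × EuclideanSpace ℝ (Fin d) → EuclideanSpace ℝ (Fin d))
    (hK : ContDiff ℝ 1 K)
    (hK1 : ∀ z z' : EuclideanSpace ℝ (Fin d), K (z, z') = - K (z', z))
    (hK2 : (∀ z z' : EuclideanSpace ℝ (Fin d), ‖fderiv ℝ (fun w => K (w, z')) z‖ ≤ L) ∧
           (∀ z z' : EuclideanSpace ℝ (Fin d), ‖fderiv ℝ (fun w => K (z, w)) z'‖ ≤ L))
    (N : ℕ) (hN : 1 ≤ N) (Zin : Fin N → EuclideanSpace ℝ (Fin d))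
    -- the solution of the N-particle ODE system with initial data Zin
    (ZN : ℝ → Fin N → EuclideanSpace ℝ (Fin d))
    (hZN0 : ZN 0 = Zin)
    (hZNode : ∀ t : ℝ,
      HasDerivAt ZN (fun i => (N : ℝ)⁻¹ • ∑ j : Fin N, K (ZN t i, ZN t j)) t)
    -- the mean field characteristic flow with initial measure μ_{Zin}
    (Zc : ℝ → EuclideanSpace ℝ (Fin d) → EuclideanSpace ℝ (Fin d))
    (hZcCont : Continuous (Function.uncurry Zc))
    (hZcGrowth : ∀ T : ℝ, 0 < T → ∃ C : ℝ, ∀ t : ℝ, |t| ≤ T → ∀ ζ,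
      ‖Zc t ζ‖ ≤ C * (1 + ‖ζ‖))
    (hZc0 : ∀ ζ, Zc 0 ζ = ζ)
    (hZcode : ∀ ζ t, HasDerivAt (fun s => Zc s ζ)
      (∫ z', K (Zc t ζ, z') ∂(Measure.map (Zc t) (empiricalMeasure Zin))) t) :
    ∀ t : ℝ, ∀ i : Fin N, ZN t i = Zc t (Zin i) :=
  stmt3_general d K hK N Zin ZN hZN0 hZNode Zc hZc0 hZcode
end
end

section
/- (Dobrushin's stability estimate.) Assume the interaction kernel K satisfies (HK1)-(HK2) with constant L. Let μ_1^in, μ_2^in be Borel probability measures on ℝ^d with finite first moment, and for j = 1,2 and t ∈ ℝ set μ_j(t) := Z(t,·,μ_j^in)#μ_j^in, where Z is the mean field characteristic flow. Then for all t ∈ ℝ, dist_{MK,1}(μ_1(t), μ_2(t)) ≤ e^{2L|t|} dist_{MK,1}(μ_1^in, μ_2^in). -/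
/-!
Fix a coupling `γ` of the initial measures and follow it along the two flows, with cost
`F t = ∫ ‖Z₁ t x - Z₂ t y‖ dγ(x, y)`. The pushforward of `γ` by `(Z₁ t, Z₂ t)` couples the
time-`t` measures, so comparing the two mean fields through it shows that `Z₁ t x - Z₂ t y`
moves with speed at most `L ‖Z₁ t x - Z₂ t y‖ + L F t`. Integrating in time and then against `γ`
gives `F t ≤ F 0 + 2L ∫₀ᵗ F`, hence `F t ≤ e^{2Lt} F 0` by Grönwall, and the infimum over `γ` is
the estimate. Negative times reduce to positive ones by reversing time, which replaces `K` by `-K`.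
-/

open MeasureTheory Real Filter Topology
open scoped ENNReal NNReal

noncomputable section

/-- The set of couplings of two Borel measures on `ℝ^d`. -/
def couplings {d : ℕ} (μ ν : Measure (EuclideanSpace ℝ (Fin d))) :
    Set (Measure (EuclideanSpace ℝ (Fin d) × EuclideanSpace ℝ (Fin d))) :=
  {γ | γ.map Prod.fst = μ ∧ γ.map Prod.snd = ν}

/-- The Monge-Kantorovich distance with exponent 1 (with values in `ℝ≥0∞`). -/
def distMK1 {d : ℕ} (μ ν : Measure (EuclideanSpace ℝ (Fin d))) : ℝ≥0∞ :=
  ⨅ γ ∈ couplings μ ν, ∫⁻ p, edist p.1 p.2 ∂γ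

open Set Function

section Calculus

variable {E : Type*} [NormedAddCommGroup E] [NormedSpace ℝ E]

theorem norm_le_add_integral_of_norm_deriv_le {f f' : ℝ → E} {g : ℝ → ℝ} {a b : ℝ}
    (hab : a ≤ b) (hf : ∀ s ∈ Icc a b, HasDerivAt f (f' s) s) (hg : Continuous g)
    (hbound : ∀ s ∈ Ico a b, ‖f' s‖ ≤ g s) :
    ‖f b‖ ≤ ‖f a‖ + ∫ s in a..b, g s :=
  have hB : ∀ x, HasDerivAt (fun x => ‖f a‖ + ∫ s in a..x, g s) (g x) x := fun x =>
    (hg.integral_hasStrictDerivAt a x).hasDerivAt.const_add _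
  image_norm_le_of_norm_deriv_right_le_deriv_boundary'
    (fun s hs => (hf s hs).continuousAt.continuousWithinAt)
    (fun s hs => (hf s (Ico_subset_Icc_self hs)).hasDerivWithinAt) (by simp)
    (continuous_iff_continuousAt.2 fun x => (hB x).continuousAt).continuousOn
    (fun x _ => (hB x).hasDerivWithinAt) hbound ⟨hab, le_rfl⟩

theorem le_mul_exp_of_le_add_integral {F : ℝ → ℝ} {c k a b : ℝ} (hk : 0 ≤ k) (hab : a ≤ b)
    (hF : Continuous F) (h : ∀ t ∈ Icc a b, F t ≤ c + ∫ s in a..t, k * F s) :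
    F b ≤ c * exp (k * (b - a)) := by
  set φ : ℝ → ℝ := fun t => c + ∫ s in a..t, k * F s
  have hφ : ∀ x, HasDerivAt φ (k * F x) x := fun x =>
    ((continuous_const.mul hF).integral_hasStrictDerivAt a x).hasDerivAt.const_add c
  have hgron := le_gronwallBound_of_liminf_deriv_right_le (f := φ) (δ := c) (K := k) (ε := 0)
    (continuous_iff_continuousAt.2 fun x => (hφ x).continuousAt).continuousOn
    (fun x _ _ hr => (hφ x).hasDerivWithinAt.liminf_right_slope_le hr) (by simp [φ])
    (fun x hx => by
      rw [add_zero]; exact mul_le_mul_of_nonneg_left (h x (Ico_subset_Icc_self hx)) hk)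
    b ⟨hab, le_rfl⟩
  rw [gronwallBound_ε0] at hgron
  exact (h b ⟨hab, le_rfl⟩).trans hgron

theorem integrable_uncurry_of_norm_le {X : Type*} [MeasurableSpace X] {γ : Measure X}
    [SFinite γ] {u : ℝ → X → ℝ} {G : X → ℝ} {a b : ℝ}
    (hu : AEStronglyMeasurable (uncurry u) ((volume.restrict (Ioc a b)).prod γ))
    (hG : Integrable G γ) (hle : ∀ s ∈ Ioc a b, ∀ x, ‖u s x‖ ≤ G x) :
    Integrable (uncurry u) ((volume.restrict (Ioc a b)).prod γ) := by
  refine Integrable.mono' (hG.comp_snd _) hu ?_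
  filter_upwards [Measure.quasiMeasurePreserving_fst.ae (ae_restrict_mem measurableSet_Ioc)]
    with q hq using hle q.1 hq q.2

end Calculus

section Coupling

variable {α β : Type*} [MeasurableSpace α] [MeasurableSpace β]

structure IsCoupling (γ : Measure (α × β)) (μ : Measure α) (ν : Measure β) : Prop where
  map_fst : γ.map Prod.fst = μ
  map_snd : γ.map Prod.snd = ν

namespace IsCoupling

variable {γ : Measure (α × β)} {μ : Measure α} {ν : Measure β}

theorem isProbabilityMeasure [IsProbabilityMeasure μ] (hγ : IsCoupling γ μ ν) :
    IsProbabilityMeasure γ :=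
  have : IsProbabilityMeasure (γ.map Prod.fst) := hγ.map_fst ▸ ‹_›
  Measure.isProbabilityMeasure_of_map Prod.fst

theorem integrable_comp_fst {E : Type*} [NormedAddCommGroup E] {f : α → E}
    (hγ : IsCoupling γ μ ν) (hf : Integrable f μ) : Integrable (fun p => f p.1) γ :=
  ((hγ.map_fst ▸ hf).comp_measurable measurable_fst :)

theorem integrable_comp_snd {E : Type*} [NormedAddCommGroup E] {g : β → E}
    (hγ : IsCoupling γ μ ν) (hg : Integrable g ν) : Integrable (fun p => g p.2) γ :=
  ((hγ.map_snd ▸ hg).comp_measurable measurable_snd :)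

theorem map_prodMap {α' β' : Type*} [MeasurableSpace α'] [MeasurableSpace β'] {f : α → α'}
    {g : β → β'} (hγ : IsCoupling γ μ ν) (hf : Measurable f) (hg : Measurable g) :
    IsCoupling (γ.map (Prod.map f g)) (μ.map f) (ν.map g) where
  map_fst := by
    rw [Measure.map_map measurable_fst (hf.prodMap hg), ← hγ.map_fst,
      Measure.map_map hf measurable_fst]
    rfl
  map_snd := by
    rw [Measure.map_map measurable_snd (hf.prodMap hg), ← hγ.map_snd,
      Measure.map_map hg measurable_snd]
    rfl

end IsCoupling

end Coupling

variable {E : Type*} [NormedAddCommGroup E]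

structure IsLipschitzKernel (L : ℝ≥0) (K : E × E → E) : Prop where
  lipschitzWith_left : ∀ z, LipschitzWith L fun a => K (a, z)
  lipschitzWith_right : ∀ a, LipschitzWith L fun z => K (a, z)

def meanField [NormedSpace ℝ E] [MeasurableSpace E] (K : E × E → E) (ν : Measure E) (a : E) :
    E :=
  ∫ z, K (a, z) ∂ν

namespace IsLipschitzKernel

variable {L : ℝ≥0} {K : E × E → E}

theorem of_fderiv_le [NormedSpace ℝ E] {L : ℝ} (hK : ContDiff ℝ 1 K)
    (h₁ : ∀ z z' : E, ‖fderiv ℝ (fun w => K (w, z')) z‖ ≤ L)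
    (h₂ : ∀ z z' : E, ‖fderiv ℝ (fun w => K (z, w)) z'‖ ≤ L) :
    IsLipschitzKernel L.toNNReal K where
  lipschitzWith_left z' := lipschitzWith_of_nnnorm_fderiv_le
    (hK.differentiable one_ne_zero |>.comp (differentiable_id.prodMk (differentiable_const _)))
    fun z => by rw [← NNReal.coe_le_coe, coe_nnnorm]; exact (h₁ z z').trans (le_coe_toNNReal L)
  lipschitzWith_right z := lipschitzWith_of_nnnorm_fderiv_le
    (hK.differentiable one_ne_zero |>.comp ((differentiable_const _).prodMk differentiable_id))
    fun z' => by rw [← NNReal.coe_le_coe, coe_nnnorm]; exact (h₂ z z').trans (le_coe_toNNReal L)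

theorem neg (hK : IsLipschitzKernel L K) : IsLipschitzKernel L (-K) :=
  ⟨fun z => (hK.lipschitzWith_left z).neg, fun a => (hK.lipschitzWith_right a).neg⟩

theorem norm_sub_le (hK : IsLipschitzKernel L K) (a b x y : E) :
    ‖K (a, x) - K (b, y)‖ ≤ L * ‖a - b‖ + L * ‖x - y‖ :=
  calc ‖K (a, x) - K (b, y)‖ ≤ ‖K (a, x) - K (b, x)‖ + ‖K (b, x) - K (b, y)‖ :=
        norm_sub_le_norm_sub_add_norm_sub _ _ _
    _ ≤ L * ‖a - b‖ + L * ‖x - y‖ :=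
        add_le_add ((hK.lipschitzWith_left x).norm_sub_le a b)
          ((hK.lipschitzWith_right b).norm_sub_le x y)

variable [MeasurableSpace E] [BorelSpace E] [SecondCountableTopology E]

theorem integrable_right (hK : IsLipschitzKernel L K) {ν : Measure E} [IsFiniteMeasure ν]
    (hν : Integrable id ν) (a : E) : Integrable (fun z => K (a, z)) ν := by
  refine ((integrable_const ‖K (a, 0)‖).add (hν.norm.const_mul L)).mono'
    (hK.lipschitzWith_right a).continuous.aestronglyMeasurable (ae_of_all _ fun z => ?_)
  have := (hK.lipschitzWith_right a).norm_sub_le z 0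
  rw [sub_zero] at this
  show ‖K (a, z)‖ ≤ ‖K (a, 0)‖ + L * ‖z‖
  linarith [norm_le_norm_add_norm_sub' (K (a, z)) (K (a, 0))]

variable [NormedSpace ℝ E]

theorem lipschitzWith_meanField (hK : IsLipschitzKernel L K) (ν : Measure E)
    [IsProbabilityMeasure ν] : LipschitzWith L (meanField K ν) := by
  refine LipschitzWith.of_dist_le_mul fun a b => ?_
  have hmeas : ∀ c, AEStronglyMeasurable (fun z => K (c, z)) ν := fun c =>
    (hK.lipschitzWith_right c).continuous.aestronglyMeasurable
  have hbound : ∀ z, ‖K (a, z) - K (b, z)‖ ≤ L * dist a b := fun z => by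
    rw [← dist_eq_norm]; exact (hK.lipschitzWith_left z).dist_le_mul a b
  have hsub : Integrable (fun z => K (a, z) - K (b, z)) ν :=
    (integrable_const _).mono' ((hmeas a).sub (hmeas b)) (ae_of_all _ hbound)
  rw [dist_eq_norm, meanField, meanField]
  -- `K (a, ·)` and `K (b, ·)` differ by a bounded function, so they are integrable together;
  -- otherwise both integrals are the junk value `0`.
  by_cases ha : Integrable (fun z => K (a, z)) ν
  · have hb : Integrable (fun z => K (b, z)) ν :=
      (ha.sub hsub).congr (ae_of_all _ fun z => by simp)
    rw [← integral_sub ha hb]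
    simpa using norm_integral_le_of_norm_le_const (ae_of_all ν hbound)
  · have hb : ¬ Integrable (fun z => K (b, z)) ν := fun hb =>
      ha ((hb.add hsub).congr (ae_of_all _ fun z => by simp))
    rw [integral_undef ha, integral_undef hb, sub_zero, norm_zero]
    positivity

theorem norm_meanField_sub_meanField_le (hK : IsLipschitzKernel L K) {ν₁ ν₂ : Measure E}
    [IsProbabilityMeasure ν₁] [IsProbabilityMeasure ν₂] (hν₁ : Integrable id ν₁)
    (hν₂ : Integrable id ν₂) {γ : Measure (E × E)} (hγ : IsCoupling γ ν₁ ν₂) (a b : E) :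
    ‖meanField K ν₁ a - meanField K ν₂ b‖ ≤ L * ‖a - b‖ + L * ∫ p, ‖p.1 - p.2‖ ∂γ := by
  have := hγ.isProbabilityMeasure
  have h₁ : meanField K ν₁ a = ∫ p, K (a, p.1) ∂γ := by
    rw [meanField, ← hγ.map_fst, integral_map measurable_fst.aemeasurable
      (hK.lipschitzWith_right a).continuous.aestronglyMeasurable]
  have h₂ : meanField K ν₂ b = ∫ p, K (b, p.2) ∂γ := by
    rw [meanField, ← hγ.map_snd, integral_map measurable_snd.aemeasurable
      (hK.lipschitzWith_right b).continuous.aestronglyMeasurable]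
  have hd : Integrable (fun p : E × E => ‖p.1 - p.2‖) γ :=
    ((hγ.integrable_comp_fst hν₁).sub (hγ.integrable_comp_snd hν₂)).norm
  rw [h₁, h₂, ← integral_sub (hγ.integrable_comp_fst (hK.integrable_right hν₁ a))
    (hγ.integrable_comp_snd (hK.integrable_right hν₂ b))]
  calc ‖∫ p, K (a, p.1) - K (b, p.2) ∂γ‖
      ≤ ∫ p, (L * ‖a - b‖ + L * ‖p.1 - p.2‖) ∂γ :=
        norm_integral_le_of_norm_le ((integrable_const _).add (hd.const_mul _))
          (ae_of_all _ fun p => hK.norm_sub_le a b p.1 p.2)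
    _ = L * ‖a - b‖ + L * ∫ p, ‖p.1 - p.2‖ ∂γ := by
        rw [integral_add (integrable_const _) (hd.const_mul _), integral_const,
          integral_const_mul]
        simp

end IsLipschitzKernel

section Flow

variable [NormedSpace ℝ E] [MeasurableSpace E] {L : ℝ≥0} {K : E × E → E} {μ : Measure E}
  {Z : ℝ → E → E}

structure IsMeanFieldFlow_s5 (K : E × E → E) (μ : Measure E) (Z : ℝ → E → E) : Prop where
  continuous_uncurry : Continuous (uncurry Z)
  zero : ∀ ζ, Z 0 ζ = ζ
  hasDerivAt : ∀ ζ t, HasDerivAt (fun s => Z s ζ) (meanField K (μ.map (Z t)) (Z t ζ)) t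

namespace IsMeanFieldFlow_s5

theorem continuous (h : IsMeanFieldFlow_s5 K μ Z) (t : ℝ) : Continuous (Z t) :=
  h.continuous_uncurry.uncurry_left t

theorem comp_neg (h : IsMeanFieldFlow_s5 K μ Z) : IsMeanFieldFlow_s5 (-K) μ fun s => Z (-s) where
  continuous_uncurry := h.continuous_uncurry.comp (continuous_fst.neg.prodMk continuous_snd)
  zero ζ := by simpa using h.zero ζ
  hasDerivAt ζ t := by
    simpa [comp_def, meanField, integral_neg] using
      (h.hasDerivAt ζ (-t)).scomp t (hasDerivAt_neg t)

variable [BorelSpace E]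

theorem isProbabilityMeasure_map [IsProbabilityMeasure μ] (h : IsMeanFieldFlow_s5 K μ Z) (t : ℝ) :
    IsProbabilityMeasure (μ.map (Z t)) :=
  Measure.isProbabilityMeasure_map (h.continuous t).aemeasurable

variable [SecondCountableTopology E] [IsProbabilityMeasure μ]

theorem dist_le_of_nonneg (hK : IsLipschitzKernel L K) (h : IsMeanFieldFlow_s5 K μ Z) {t : ℝ}
    (ht : 0 ≤ t) (ζ ζ' : E) : dist (Z t ζ) (Z t ζ') ≤ dist ζ ζ' * exp (L * t) := by
  simpa [h.zero] using dist_le_of_trajectories_ODE (v := fun s => meanField K (μ.map (Z s)))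
    (fun s => have := h.isProbabilityMeasure_map s; hK.lipschitzWith_meanField _)
    (h.continuous_uncurry.uncurry_right ζ).continuousOn
    (fun s _ => (h.hasDerivAt ζ s).hasDerivWithinAt)
    (h.continuous_uncurry.uncurry_right ζ').continuousOn
    (fun s _ => (h.hasDerivAt ζ' s).hasDerivWithinAt) le_rfl t ⟨ht, le_rfl⟩

theorem dist_le (hK : IsLipschitzKernel L K) (h : IsMeanFieldFlow_s5 K μ Z) (t : ℝ) (ζ ζ' : E) :
    dist (Z t ζ) (Z t ζ') ≤ dist ζ ζ' * exp (L * |t|) := by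
  rcases le_total 0 t with ht | ht
  · simpa [abs_of_nonneg ht] using h.dist_le_of_nonneg hK ht ζ ζ'
  · simpa [abs_of_nonpos ht] using h.comp_neg.dist_le_of_nonneg hK.neg (neg_nonneg.2 ht) ζ ζ'

theorem norm_le (hK : IsLipschitzKernel L K) (h : IsMeanFieldFlow_s5 K μ Z) (t : ℝ) (ζ : E) :
    ‖Z t ζ‖ ≤ ‖Z t 0‖ + ‖ζ‖ * exp (L * |t|) := by
  have := h.dist_le hK t ζ 0
  rw [dist_eq_norm, dist_zero_right] at this
  linarith [norm_le_norm_add_norm_sub' (Z t ζ) (Z t 0)]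

theorem exists_norm_le (hK : IsLipschitzKernel L K) (h : IsMeanFieldFlow_s5 K μ Z) (T : ℝ) :
    ∃ C, ∀ s ∈ Icc (-T) T, ∀ ζ, ‖Z s ζ‖ ≤ C + ‖ζ‖ * exp (L * T) := by
  obtain ⟨C, hC⟩ := isCompact_Icc.exists_bound_of_continuousOn
    (h.continuous_uncurry.uncurry_right 0).continuousOn (s := Icc (-T) T)
  refine ⟨C, fun s hs ζ => (h.norm_le hK s ζ).trans (add_le_add (hC s hs) ?_)⟩
  gcongr
  exact abs_le.2 hs

theorem integrable (hK : IsLipschitzKernel L K) (h : IsMeanFieldFlow_s5 K μ Z)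
    (hμ : Integrable id μ) (t : ℝ) : Integrable (Z t) μ :=
  ((integrable_const _).add (hμ.norm.mul_const _)).mono' (h.continuous t).aestronglyMeasurable
    (ae_of_all _ (h.norm_le hK t))

theorem integrable_id_map (hK : IsLipschitzKernel L K) (h : IsMeanFieldFlow_s5 K μ Z)
    (hμ : Integrable id μ) (t : ℝ) : Integrable id (μ.map (Z t)) :=
  (integrable_map_measure aestronglyMeasurable_id (h.continuous t).aemeasurable).2
    (h.integrable hK hμ t)

end IsMeanFieldFlow_s5

end Flow

section FlowCost

variable [NormedSpace ℝ E] [MeasurableSpace E] [BorelSpace E] [SecondCountableTopology E]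
  {L : ℝ≥0} {K : E × E → E} {μ₁ μ₂ : Measure E} [IsProbabilityMeasure μ₁]
  [IsProbabilityMeasure μ₂] {Z₁ Z₂ : ℝ → E → E} {γ : Measure (E × E)}

def flowCost (Z₁ Z₂ : ℝ → E → E) (γ : Measure (E × E)) (t : ℝ) : ℝ :=
  ∫ p, ‖Z₁ t p.1 - Z₂ t p.2‖ ∂γ

theorem integrable_norm_flow_sub (hK : IsLipschitzKernel L K) (h₁ : IsMeanFieldFlow_s5 K μ₁ Z₁)
    (h₂ : IsMeanFieldFlow_s5 K μ₂ Z₂) (hμ₁ : Integrable id μ₁) (hμ₂ : Integrable id μ₂)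
    (hγ : IsCoupling γ μ₁ μ₂) (t : ℝ) :
    Integrable (fun p : E × E => ‖Z₁ t p.1 - Z₂ t p.2‖) γ :=
  ((hγ.integrable_comp_fst (h₁.integrable hK hμ₁ t)).sub
    (hγ.integrable_comp_snd (h₂.integrable hK hμ₂ t))).norm

theorem exists_integrable_norm_flow_sub_le (hK : IsLipschitzKernel L K)
    (h₁ : IsMeanFieldFlow_s5 K μ₁ Z₁) (h₂ : IsMeanFieldFlow_s5 K μ₂ Z₂) (hμ₁ : Integrable id μ₁)
    (hμ₂ : Integrable id μ₂) (hγ : IsCoupling γ μ₁ μ₂) (T : ℝ) :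
    ∃ G : E × E → ℝ, Integrable G γ ∧
      ∀ s ∈ Icc (-T) T, ∀ p : E × E, ‖Z₁ s p.1 - Z₂ s p.2‖ ≤ G p := by
  obtain ⟨C₁, hC₁⟩ := h₁.exists_norm_le hK T
  obtain ⟨C₂, hC₂⟩ := h₂.exists_norm_le hK T
  have := hγ.isProbabilityMeasure
  refine ⟨fun p => C₁ + C₂ + (‖p.1‖ + ‖p.2‖) * exp (L * T), ?_, fun s hs p => ?_⟩
  · exact (integrable_const _).add (((hγ.integrable_comp_fst hμ₁).norm.add
      (hγ.integrable_comp_snd hμ₂).norm).mul_const _)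
  · linarith [norm_sub_le (Z₁ s p.1) (Z₂ s p.2), hC₁ s hs p.1, hC₂ s hs p.2]

theorem continuous_flowCost (hK : IsLipschitzKernel L K) (h₁ : IsMeanFieldFlow_s5 K μ₁ Z₁)
    (h₂ : IsMeanFieldFlow_s5 K μ₂ Z₂) (hμ₁ : Integrable id μ₁) (hμ₂ : Integrable id μ₂)
    (hγ : IsCoupling γ μ₁ μ₂) : Continuous (flowCost Z₁ Z₂ γ) := by
  refine continuous_iff_continuousAt.2 fun t => ?_
  obtain ⟨G, hG, hle⟩ := exists_integrable_norm_flow_sub_le hK h₁ h₂ hμ₁ hμ₂ hγ (|t| + 1)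
  have hon : ContinuousOn (flowCost Z₁ Z₂ γ) (Icc (-(|t| + 1)) (|t| + 1)) := by
    refine continuousOn_of_dominated (fun s _ => ?_) (fun s hs => ae_of_all _ fun p => ?_) hG
      (ae_of_all _ fun p => Continuous.continuousOn ?_)
    · exact (((h₁.continuous s).comp continuous_fst).sub
        ((h₂.continuous s).comp continuous_snd)).norm.aestronglyMeasurable
    · simpa using hle s hs p
    · exact ((h₁.continuous_uncurry.uncurry_right p.1).sub
        (h₂.continuous_uncurry.uncurry_right p.2)).norm
  exact hon.continuousAt (Icc_mem_nhds (by linarith [neg_abs_le t]) (by linarith [le_abs_self t]))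

theorem norm_meanField_sub_le_flowCost (hK : IsLipschitzKernel L K)
    (h₁ : IsMeanFieldFlow_s5 K μ₁ Z₁) (h₂ : IsMeanFieldFlow_s5 K μ₂ Z₂) (hμ₁ : Integrable id μ₁)
    (hμ₂ : Integrable id μ₂) (hγ : IsCoupling γ μ₁ μ₂) (t : ℝ) (a b : E) :
    ‖meanField K (μ₁.map (Z₁ t)) a - meanField K (μ₂.map (Z₂ t)) b‖ ≤
      L * ‖a - b‖ + L * flowCost Z₁ Z₂ γ t := by
  have := h₁.isProbabilityMeasure_map t
  have := h₂.isProbabilityMeasure_map t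
  have hZ := (h₁.continuous t).measurable.prodMap (h₂.continuous t).measurable
  have hcost : ∫ q, ‖q.1 - q.2‖ ∂(γ.map (Prod.map (Z₁ t) (Z₂ t))) = flowCost Z₁ Z₂ γ t :=
    integral_map hZ.aemeasurable (continuous_fst.sub continuous_snd).norm.aestronglyMeasurable
  rw [← hcost]
  exact hK.norm_meanField_sub_meanField_le (h₁.integrable_id_map hK hμ₁ t)
    (h₂.integrable_id_map hK hμ₂ t)
    (hγ.map_prodMap (h₁.continuous t).measurable (h₂.continuous t).measurable) a b

theorem norm_flow_sub_le_add_integral (hK : IsLipschitzKernel L K)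
    (h₁ : IsMeanFieldFlow_s5 K μ₁ Z₁) (h₂ : IsMeanFieldFlow_s5 K μ₂ Z₂) (hμ₁ : Integrable id μ₁)
    (hμ₂ : Integrable id μ₂) (hγ : IsCoupling γ μ₁ μ₂) {t : ℝ} (ht : 0 ≤ t) (x y : E) :
    ‖Z₁ t x - Z₂ t y‖ ≤ ‖Z₁ 0 x - Z₂ 0 y‖ + L * (∫ s in 0..t, ‖Z₁ s x - Z₂ s y‖) +
      L * ∫ s in 0..t, flowCost Z₁ Z₂ γ s := by
  have hu : Continuous fun s => (L : ℝ) * ‖Z₁ s x - Z₂ s y‖ := continuous_const.mul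
    ((h₁.continuous_uncurry.uncurry_right x).sub (h₂.continuous_uncurry.uncurry_right y)).norm
  have hF : Continuous fun s => (L : ℝ) * flowCost Z₁ Z₂ γ s :=
    continuous_const.mul (continuous_flowCost hK h₁ h₂ hμ₁ hμ₂ hγ)
  have := norm_le_add_integral_of_norm_deriv_le (f := fun s => Z₁ s x - Z₂ s y)
    (g := fun s => L * ‖Z₁ s x - Z₂ s y‖ + L * flowCost Z₁ Z₂ γ s) ht
    (fun s _ => (h₁.hasDerivAt x s).sub (h₂.hasDerivAt y s)) (hu.add hF)
    (fun s _ => norm_meanField_sub_le_flowCost hK h₁ h₂ hμ₁ hμ₂ hγ s _ _)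
  rwa [intervalIntegral.integral_add (hu.intervalIntegrable _ _) (hF.intervalIntegrable _ _),
    intervalIntegral.integral_const_mul, intervalIntegral.integral_const_mul, ← add_assoc] at this

theorem flowCost_le_add_integral (hK : IsLipschitzKernel L K)
    (h₁ : IsMeanFieldFlow_s5 K μ₁ Z₁) (h₂ : IsMeanFieldFlow_s5 K μ₂ Z₂) (hμ₁ : Integrable id μ₁)
    (hμ₂ : Integrable id μ₂) (hγ : IsCoupling γ μ₁ μ₂) {t : ℝ} (ht : 0 ≤ t) :
    flowCost Z₁ Z₂ γ t ≤ flowCost Z₁ Z₂ γ 0 + ∫ s in 0..t, 2 * L * flowCost Z₁ Z₂ γ s := by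
  have := hγ.isProbabilityMeasure
  set u : ℝ → E × E → ℝ := fun s p => ‖Z₁ s p.1 - Z₂ s p.2‖
  have hu : ∀ s, Integrable (u s) γ := integrable_norm_flow_sub hK h₁ h₂ hμ₁ hμ₂ hγ
  obtain ⟨G, hG, hle⟩ := exists_integrable_norm_flow_sub_le hK h₁ h₂ hμ₁ hμ₂ hγ t
  have hprod : Integrable (uncurry u) ((volume.restrict (Ioc 0 t)).prod γ) := by
    refine integrable_uncurry_of_norm_le ?_ hG fun s hs p => ?_
    · exact ((h₁.continuous_uncurry.comp (continuous_fst.prodMk continuous_snd.fst)).sub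
        (h₂.continuous_uncurry.comp (continuous_fst.prodMk continuous_snd.snd))).norm
        |>.aestronglyMeasurable
    · simpa [u] using hle s ⟨by linarith [hs.1], hs.2⟩ p
  have hint : Integrable (fun p => L * ∫ s in 0..t, u s p) γ := by
    simp only [intervalIntegral.integral_of_le ht]
    exact hprod.integral_prod_right.const_mul _
  have hswap : ∫ p, (∫ s in 0..t, u s p) ∂γ = ∫ s in 0..t, flowCost Z₁ Z₂ γ s := by
    simp only [intervalIntegral.integral_of_le ht]
    exact (integral_integral_swap hprod).symm
  have hrhs : Integrable
      (fun p => u 0 p + L * (∫ s in 0..t, u s p) + L * ∫ s in 0..t, flowCost Z₁ Z₂ γ s) γ :=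
    ((hu 0).add hint).add (integrable_const _)
  calc flowCost Z₁ Z₂ γ t = ∫ p, u t p ∂γ := rfl
    _ ≤ ∫ p, (u 0 p + L * (∫ s in 0..t, u s p) + L * ∫ s in 0..t, flowCost Z₁ Z₂ γ s) ∂γ :=
        integral_mono (hu t) hrhs fun p =>
          norm_flow_sub_le_add_integral hK h₁ h₂ hμ₁ hμ₂ hγ ht p.1 p.2
    _ = flowCost Z₁ Z₂ γ 0 + ∫ s in 0..t, 2 * L * flowCost Z₁ Z₂ γ s := by
        rw [integral_add (f := fun p => u 0 p + L * ∫ s in 0..t, u s p) ((hu 0).add hint)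
            (integrable_const _), integral_add (hu 0) hint,
          integral_const_mul, hswap, integral_const, intervalIntegral.integral_const_mul]
        simp only [flowCost, u, probReal_univ, one_smul]
        ring

theorem flowCost_le (hK : IsLipschitzKernel L K) (h₁ : IsMeanFieldFlow_s5 K μ₁ Z₁)
    (h₂ : IsMeanFieldFlow_s5 K μ₂ Z₂) (hμ₁ : Integrable id μ₁) (hμ₂ : Integrable id μ₂)
    (hγ : IsCoupling γ μ₁ μ₂) {t : ℝ} (ht : 0 ≤ t) :
    flowCost Z₁ Z₂ γ t ≤ flowCost Z₁ Z₂ γ 0 * exp (2 * L * t) := by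
  simpa using le_mul_exp_of_le_add_integral (by positivity) ht
    (continuous_flowCost hK h₁ h₂ hμ₁ hμ₂ hγ)
    fun s hs => flowCost_le_add_integral hK h₁ h₂ hμ₁ hμ₂ hγ hs.1

theorem lintegral_edist_eq_ofReal_flowCost (hK : IsLipschitzKernel L K)
    (h₁ : IsMeanFieldFlow_s5 K μ₁ Z₁) (h₂ : IsMeanFieldFlow_s5 K μ₂ Z₂) (hμ₁ : Integrable id μ₁)
    (hμ₂ : Integrable id μ₂) (hγ : IsCoupling γ μ₁ μ₂) (t : ℝ) :
    ∫⁻ p, edist (Z₁ t p.1) (Z₂ t p.2) ∂γ = ENNReal.ofReal (flowCost Z₁ Z₂ γ t) := by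
  rw [flowCost, ofReal_integral_eq_lintegral_ofReal
    (integrable_norm_flow_sub hK h₁ h₂ hμ₁ hμ₂ hγ t) (ae_of_all _ fun _ => norm_nonneg _)]
  simp only [edist_eq_enorm_sub, ofReal_norm]

end FlowCost

section EuclideanSpace

variable {d : ℕ} {L : ℝ≥0}
  {K : EuclideanSpace ℝ (Fin d) × EuclideanSpace ℝ (Fin d) → EuclideanSpace ℝ (Fin d)}
  {μ₁ μ₂ : Measure (EuclideanSpace ℝ (Fin d))} [IsProbabilityMeasure μ₁]
  [IsProbabilityMeasure μ₂] {Z₁ Z₂ : ℝ → EuclideanSpace ℝ (Fin d) → EuclideanSpace ℝ (Fin d)}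

theorem distMK1_map_le_of_isCoupling (hK : IsLipschitzKernel L K)
    (h₁ : IsMeanFieldFlow_s5 K μ₁ Z₁) (h₂ : IsMeanFieldFlow_s5 K μ₂ Z₂) (hμ₁ : Integrable id μ₁)
    (hμ₂ : Integrable id μ₂) {γ : Measure (EuclideanSpace ℝ (Fin d) × EuclideanSpace ℝ (Fin d))}
    (hγ : IsCoupling γ μ₁ μ₂) {t : ℝ} (ht : 0 ≤ t) :
    distMK1 (μ₁.map (Z₁ t)) (μ₂.map (Z₂ t)) ≤
      ENNReal.ofReal (exp (2 * L * t)) * ∫⁻ p, edist p.1 p.2 ∂γ := by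
  have hZ := (h₁.continuous t).measurable.prodMap (h₂.continuous t).measurable
  have hγt := hγ.map_prodMap (h₁.continuous t).measurable (h₂.continuous t).measurable
  have hcost := lintegral_edist_eq_ofReal_flowCost hK h₁ h₂ hμ₁ hμ₂ hγ
  calc distMK1 (μ₁.map (Z₁ t)) (μ₂.map (Z₂ t))
      ≤ ∫⁻ q, edist q.1 q.2 ∂(γ.map (Prod.map (Z₁ t) (Z₂ t))) :=
        iInf₂_le _ ⟨hγt.map_fst, hγt.map_snd⟩
    _ = ENNReal.ofReal (flowCost Z₁ Z₂ γ t) := by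
        rw [lintegral_map (continuous_fst.edist continuous_snd).measurable hZ]
        exact hcost t
    _ ≤ ENNReal.ofReal (exp (2 * L * t) * flowCost Z₁ Z₂ γ 0) := by
        rw [mul_comm]
        exact ENNReal.ofReal_le_ofReal (flowCost_le hK h₁ h₂ hμ₁ hμ₂ hγ ht)
    _ = ENNReal.ofReal (exp (2 * L * t)) * ∫⁻ p, edist p.1 p.2 ∂γ := by
        rw [ENNReal.ofReal_mul (exp_pos _).le, ← hcost 0]
        simp only [h₁.zero, h₂.zero]

theorem distMK1_map_le (hK : IsLipschitzKernel L K) (h₁ : IsMeanFieldFlow_s5 K μ₁ Z₁)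
    (h₂ : IsMeanFieldFlow_s5 K μ₂ Z₂) (hμ₁ : Integrable id μ₁) (hμ₂ : Integrable id μ₂) {t : ℝ}
    (ht : 0 ≤ t) :
    distMK1 (μ₁.map (Z₁ t)) (μ₂.map (Z₂ t)) ≤
      ENNReal.ofReal (exp (2 * L * t)) * distMK1 μ₁ μ₂ :=
  calc distMK1 (μ₁.map (Z₁ t)) (μ₂.map (Z₂ t))
      ≤ ⨅ γ ∈ couplings μ₁ μ₂, ENNReal.ofReal (exp (2 * L * t)) * ∫⁻ p, edist p.1 p.2 ∂γ :=
        le_iInf₂ fun _ hγ =>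
          distMK1_map_le_of_isCoupling hK h₁ h₂ hμ₁ hμ₂ ⟨hγ.1, hγ.2⟩ ht
    _ = ENNReal.ofReal (exp (2 * L * t)) * distMK1 μ₁ μ₂ := by
        simp only [distMK1, ENNReal.mul_iInf_of_ne (ENNReal.ofReal_pos.2 (exp_pos _)).ne'
          ENNReal.ofReal_ne_top]

end EuclideanSpace

theorem stmt5_general (d : ℕ) (L : ℝ)
    (K : EuclideanSpace ℝ (Fin d) × EuclideanSpace ℝ (Fin d) → EuclideanSpace ℝ (Fin d))
    (hK : ContDiff ℝ 1 K)
    (hK2 : (∀ z z' : EuclideanSpace ℝ (Fin d), ‖fderiv ℝ (fun w => K (w, z')) z‖ ≤ L) ∧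
           (∀ z z' : EuclideanSpace ℝ (Fin d), ‖fderiv ℝ (fun w => K (z, w)) z'‖ ≤ L))
    (μ₁ μ₂ : Measure (EuclideanSpace ℝ (Fin d)))
    [IsProbabilityMeasure μ₁] [IsProbabilityMeasure μ₂]
    (hmom₁ : ∫⁻ z, (‖z‖₊ : ℝ≥0∞) ∂μ₁ ≠ ⊤) (hmom₂ : ∫⁻ z, (‖z‖₊ : ℝ≥0∞) ∂μ₂ ≠ ⊤)
    (Z₁ Z₂ : ℝ → EuclideanSpace ℝ (Fin d) → EuclideanSpace ℝ (Fin d))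
    (hZ₁Cont : Continuous (Function.uncurry Z₁))
    (hZ₂Cont : Continuous (Function.uncurry Z₂))
    (hZ₁0 : ∀ ζ, Z₁ 0 ζ = ζ) (hZ₂0 : ∀ ζ, Z₂ 0 ζ = ζ)
    (hZ₁ode : ∀ ζ t, HasDerivAt (fun s => Z₁ s ζ)
      (∫ z', K (Z₁ t ζ, z') ∂(Measure.map (Z₁ t) μ₁)) t)
    (hZ₂ode : ∀ ζ t, HasDerivAt (fun s => Z₂ s ζ)
      (∫ z', K (Z₂ t ζ, z') ∂(Measure.map (Z₂ t) μ₂)) t) :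
    ∀ t : ℝ,
      distMK1 (Measure.map (Z₁ t) μ₁) (Measure.map (Z₂ t) μ₂) ≤
        ENNReal.ofReal (Real.exp (2 * L * |t|)) * distMK1 μ₁ μ₂ := by
  intro t
  have hL : (L.toNNReal : ℝ) = L := Real.coe_toNNReal L ((norm_nonneg _).trans (hK2.1 0 0))
  have hKL := IsLipschitzKernel.of_fderiv_le hK hK2.1 hK2.2
  have h₁ : IsMeanFieldFlow_s5 K μ₁ Z₁ := ⟨hZ₁Cont, hZ₁0, hZ₁ode⟩
  have h₂ : IsMeanFieldFlow_s5 K μ₂ Z₂ := ⟨hZ₂Cont, hZ₂0, hZ₂ode⟩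
  have hμ₁ : Integrable id μ₁ := ⟨aestronglyMeasurable_id, lt_top_iff_ne_top.2 hmom₁⟩
  have hμ₂ : Integrable id μ₂ := ⟨aestronglyMeasurable_id, lt_top_iff_ne_top.2 hmom₂⟩
  rcases le_total 0 t with ht | ht
  · simpa [hL, abs_of_nonneg ht] using distMK1_map_le hKL h₁ h₂ hμ₁ hμ₂ ht
  · simpa [hL, abs_of_nonpos ht] using
      distMK1_map_le hKL.neg h₁.comp_neg h₂.comp_neg hμ₁ hμ₂ (neg_nonneg.2 ht)

/-- Dobrushin's stability estimate: if `Z₁, Z₂` are the mean field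
characteristic flows associated with initial probability measures `μ₁^in, μ₂^in`
(with finite first moment), and `μⱼ(t) := Zⱼ(t,·)#μⱼ^in`, then
`dist_{MK,1}(μ₁(t), μ₂(t)) ≤ e^{2L|t|} dist_{MK,1}(μ₁^in, μ₂^in)` for all `t`. -/
theorem stmt5 (d : ℕ) (L : ℝ) (hL : 0 ≤ L)
    (K : EuclideanSpace ℝ (Fin d) × EuclideanSpace ℝ (Fin d) → EuclideanSpace ℝ (Fin d))
    (hK : ContDiff ℝ 1 K)
    (hK1 : ∀ z z' : EuclideanSpace ℝ (Fin d), K (z, z') = - K (z', z))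
    (hK2 : (∀ z z' : EuclideanSpace ℝ (Fin d), ‖fderiv ℝ (fun w => K (w, z')) z‖ ≤ L) ∧
           (∀ z z' : EuclideanSpace ℝ (Fin d), ‖fderiv ℝ (fun w => K (z, w)) z'‖ ≤ L))
    (μ₁ μ₂ : Measure (EuclideanSpace ℝ (Fin d)))
    [IsProbabilityMeasure μ₁] [IsProbabilityMeasure μ₂]
    (hmom₁ : ∫⁻ z, (‖z‖₊ : ℝ≥0∞) ∂μ₁ ≠ ⊤) (hmom₂ : ∫⁻ z, (‖z‖₊ : ℝ≥0∞) ∂μ₂ ≠ ⊤)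
    (Z₁ Z₂ : ℝ → EuclideanSpace ℝ (Fin d) → EuclideanSpace ℝ (Fin d))
    (hZ₁Cont : Continuous (Function.uncurry Z₁))
    (hZ₂Cont : Continuous (Function.uncurry Z₂))
    (hZ₁0 : ∀ ζ, Z₁ 0 ζ = ζ) (hZ₂0 : ∀ ζ, Z₂ 0 ζ = ζ)
    (hZ₁ode : ∀ ζ t, HasDerivAt (fun s => Z₁ s ζ)
      (∫ z', K (Z₁ t ζ, z') ∂(Measure.map (Z₁ t) μ₁)) t)
    (hZ₂ode : ∀ ζ t, HasDerivAt (fun s => Z₂ s ζ)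
      (∫ z', K (Z₂ t ζ, z') ∂(Measure.map (Z₂ t) μ₂)) t) :
    ∀ t : ℝ,
      distMK1 (Measure.map (Z₁ t) μ₁) (Measure.map (Z₂ t) μ₂) ≤
        ENNReal.ofReal (Real.exp (2 * L * |t|)) * distMK1 μ₁ μ₂ :=
  stmt5_general d L K hK hK2 μ₁ μ₂ hmom₁ hmom₂ Z₁ Z₂ hZ₁Cont hZ₂Cont hZ₁0 hZ₂0 hZ₁ode hZ₂ode
end
end

section
/- (Uniqueness for abstract infinite hierarchies.) Let (E_n)_{n≥1} be a sequence of Banach spaces. For each n ≥ 1, let (U_n(t))_{t∈ℝ} be a strongly continuous one-parameter group of linear isometries of E_n, and let L_{n,n+1} : E_{n+1} → E_n be a bounded linear operator; assume there exists C > 0 such that ‖L_{n,n+1}‖ ≤ C n for every n ≥ 1. Let t* > 0 and, for each n ≥ 1, let u_n ∈ C¹([0,t*], E_n) satisfy u̇_n(t) = U_n(t) L_{n,n+1} U_{n+1}(−t) u_{n+1}(t) for all t ∈ [0,t*] and u_n(0) = 0. If there exists R > 0 such that sup_{0≤t≤t*} ‖u_n(t)‖_{E_n} ≤ R^n for all n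 ≥ 1, then u_n(t) = 0 for all t ∈ [0,t*] and all n ≥ 1. -/
/-! Since the `U n t` are isometries, `‖u̇ₙ‖ ≤ C (n+1) ‖u_{n+1}‖`.
If all `u m` vanish at `a`, integrating this inequality `k` times down the hierarchy gives
`‖uₙ(x)‖ ≤ (n+k).choose k · (C (x - a))^k · R^(n+k+1) ≤ 2^n R^(n+1) (2 C R (x - a))^k`,
which tends to `0` as `k → ∞` as long as `2 C R (x - a) < 1`. So vanishing at a time propagates
over intervals of a fixed length, and hence from `0` to all of `[0, t*]`. -/

open Filter Topology Set

theorem norm_le_of_hasDerivWithinAt_of_norm_le_pow {F : Type*} [NormedAddCommGroup F]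
    [NormedSpace ℝ F] {g g' : ℝ → F} {a b K : ℝ} {k : ℕ}
    (hg : ∀ x ∈ Icc a b, HasDerivWithinAt g (g' x) (Icc a b) x) (hga : g a = 0)
    (hg' : ∀ x ∈ Ico a b, ‖g' x‖ ≤ K * (x - a) ^ k) :
    ∀ x ∈ Icc a b, ‖g x‖ ≤ K * (x - a) ^ (k + 1) / (k + 1) := by
  have hB : ∀ x, HasDerivAt (fun y => K * (y - a) ^ (k + 1) / (k + 1)) (K * (x - a) ^ k) x := by
    intro x
    refine ((((hasDerivAt_id x).sub_const a).pow (k + 1)).const_mul K).div_const ((k : ℝ) + 1)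
      |>.congr_deriv ?_
    simp only [id, Nat.cast_add, Nat.cast_one, Nat.add_sub_cancel]
    field_simp
  exact fun x hx => image_norm_le_of_norm_deriv_right_le_deriv_boundary
    (fun y hy => (hg y hy).continuousWithinAt)
    (fun y hy => (hg y (Ico_subset_Icc_self hy)).mono_of_mem_nhdsWithin (Icc_mem_nhdsGE_of_mem hy))
    (by simp [hga]) hB hg' hx

section Hierarchy

variable {E : ℕ → Type*} [∀ n, NormedAddCommGroup (E n)] [∀ n, NormedSpace ℝ (E n)]
  {f f' : (n : ℕ) → ℝ → E n} {C R a b : ℝ}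

theorem norm_hierarchy_le_choose_mul_pow (hC : 0 ≤ C)
    (hf : ∀ n, ∀ x ∈ Icc a b, HasDerivWithinAt (f n) (f' n x) (Icc a b) x)
    (hf' : ∀ n, ∀ x ∈ Icc a b, ‖f' n x‖ ≤ C * (n + 1) * ‖f (n + 1) x‖)
    (hfa : ∀ n, f n a = 0) (hbound : ∀ n, ∀ x ∈ Icc a b, ‖f n x‖ ≤ R ^ (n + 1))
    (k n : ℕ) :
    ∀ x ∈ Icc a b,
      ‖f n x‖ ≤ (n + k).choose k * C ^ k * (x - a) ^ k * R ^ (n + k + 1) := by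
  induction k generalizing n with
  | zero => simpa using hbound n
  | succ k ih =>
    have hderiv : ∀ y ∈ Ico a b, ‖f' n y‖ ≤
        (C ^ (k + 1) * (n + 1) * (n + 1 + k).choose k * R ^ (n + k + 2)) * (y - a) ^ k := by
      intro y hy
      calc ‖f' n y‖ ≤ C * (n + 1) * ‖f (n + 1) y‖ := hf' n y (Ico_subset_Icc_self hy)
        _ ≤ C * (n + 1) *
            ((n + 1 + k).choose k * C ^ k * (y - a) ^ k * R ^ (n + 1 + k + 1)) := by
          gcongr
          exact ih (n + 1) y (Ico_subset_Icc_self hy)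
        _ = _ := by ring_nf
    have hchoose :
        ((n + 1 + k).choose k : ℝ) * (n + 1) = (n + (k + 1)).choose (k + 1) * (k + 1) := by
      have := Nat.choose_succ_right_eq (n + 1 + k) k
      rw [show n + 1 + k - k = n + 1 by omega, show n + 1 + k = n + (k + 1) by omega] at this
      rw [show n + 1 + k = n + (k + 1) by omega]
      exact_mod_cast this.symm
    intro x hx
    calc ‖f n x‖ ≤ _ := norm_le_of_hasDerivWithinAt_of_norm_le_pow (hf n) (hfa n) hderiv x hx
      _ = _ := by
        field_simp
        linear_combination (C ^ (k + 1) * R ^ (n + k + 2) * (x - a) ^ (k + 1)) * hchoose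

theorem hierarchy_eq_zero_on_short_interval (hC : 0 ≤ C) (hR : 0 ≤ R)
    (hab : 2 * C * R * (b - a) < 1)
    (hf : ∀ n, ∀ x ∈ Icc a b, HasDerivWithinAt (f n) (f' n x) (Icc a b) x)
    (hf' : ∀ n, ∀ x ∈ Icc a b, ‖f' n x‖ ≤ C * (n + 1) * ‖f (n + 1) x‖)
    (hfa : ∀ n, f n a = 0) (hbound : ∀ n, ∀ x ∈ Icc a b, ‖f n x‖ ≤ R ^ (n + 1)) :
    ∀ n, ∀ x ∈ Icc a b, f n x = 0 := by
  intro n x hx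
  have hxa : 0 ≤ x - a := sub_nonneg.2 hx.1
  have hq : 0 ≤ 2 * C * R * (b - a) := by
    have : 0 ≤ b - a := hxa.trans (by linarith [hx.2])
    positivity
  have hle (k : ℕ) : ‖f n x‖ ≤ 2 ^ n * R ^ (n + 1) * (2 * C * R * (b - a)) ^ k := calc
    ‖f n x‖ ≤ (n + k).choose k * C ^ k * (x - a) ^ k * R ^ (n + k + 1) :=
      norm_hierarchy_le_choose_mul_pow hC hf hf' hfa hbound k n x hx
    _ ≤ 2 ^ (n + k) * C ^ k * (b - a) ^ k * R ^ (n + k + 1) := by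
      gcongr
      · exact_mod_cast Nat.choose_le_two_pow (n + k) k
      · exact hx.2
    _ = 2 ^ n * R ^ (n + 1) * (2 * C * R * (b - a)) ^ k := by rw [mul_pow, mul_pow, mul_pow]; ring
  have hlim :
      Tendsto (fun k : ℕ => 2 ^ n * R ^ (n + 1) * (2 * C * R * (b - a)) ^ k) atTop (𝓝 0) := by
    simpa using (tendsto_pow_atTop_nhds_zero_of_lt_one hq hab).const_mul (2 ^ n * R ^ (n + 1))
  exact norm_le_zero_iff.1 (ge_of_tendsto' hlim hle)

theorem hierarchy_eq_zero (hC : 0 ≤ C) (hR : 0 ≤ R)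
    (hf : ∀ n, ∀ x ∈ Icc a b, HasDerivWithinAt (f n) (f' n x) (Icc a b) x)
    (hf' : ∀ n, ∀ x ∈ Icc a b, ‖f' n x‖ ≤ C * (n + 1) * ‖f (n + 1) x‖)
    (hfa : ∀ n, f n a = 0) (hbound : ∀ n, ∀ x ∈ Icc a b, ‖f n x‖ ≤ R ^ (n + 1)) :
    ∀ n, ∀ x ∈ Icc a b, f n x = 0 := by
  set δ := 1 / (4 * C * R + 1)
  have hCR : 0 ≤ C * R := mul_nonneg hC hR
  have hδ : 0 < δ := by positivity
  have hδ_short : 2 * C * R * δ < 1 := by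
    rw [show 2 * C * R * δ = 2 * (C * R) / (4 * (C * R) + 1) by ring, div_lt_one (by positivity)]
    linarith
  suffices h : ∀ j : ℕ, ∀ n, ∀ x ∈ Icc a b, x ≤ a + j * δ → f n x = 0 by
    intro n x hx
    obtain ⟨j, hj⟩ := exists_nat_ge ((x - a) / δ)
    exact h j n x hx (by rw [div_le_iff₀ hδ] at hj; linarith)
  intro j
  induction j with
  | zero =>
    intro n x hx hxa
    rw [le_antisymm (by simpa using hxa) hx.1]
    exact hfa n
  | succ j ih =>
    intro n x hx hxj
    rcases le_or_gt x (a + j * δ) with h | h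
    · exact ih n x hx h
    have hc : a + j * δ ∈ Icc a b :=
      ⟨le_add_of_nonneg_right (by positivity), h.le.trans hx.2⟩
    have hsub : Icc (a + j * δ) x ⊆ Icc a b := Icc_subset_Icc hc.1 hx.2
    refine hierarchy_eq_zero_on_short_interval hC hR ?_
      (fun m y hy => (hf m y (hsub hy)).mono hsub) (fun m y hy => hf' m y (hsub hy))
      (fun m => ih m _ hc le_rfl)
      (fun m y hy => hbound m y (hsub hy)) n x ⟨h.le, le_rfl⟩
    calc 2 * C * R * (x - (a + j * δ)) ≤ 2 * C * R * δ := by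
          gcongr
          push_cast at hxj
          linarith
      _ < 1 := hδ_short

end Hierarchy

theorem stmt19_general
    (E : ℕ → Type*) [∀ n, NormedAddCommGroup (E n)] [∀ n, NormedSpace ℝ (E n)]
    (U : (n : ℕ) → ℝ → (E n ≃ₗᵢ[ℝ] E n))
    (Lop : (n : ℕ) → E (n + 1) →L[ℝ] E n)
    (C : ℝ) (hC : 0 < C) (hLop : ∀ n : ℕ, ‖Lop n‖ ≤ C * (n + 1))
    (tstar : ℝ)
    (u : (n : ℕ) → ℝ → E n)
    (hu0 : ∀ n, u n 0 = 0)
    (huode : ∀ n : ℕ, ∀ t ∈ Set.Icc (0 : ℝ) tstar,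
      HasDerivWithinAt (u n)
        (U n t (Lop n (U (n + 1) (-t) (u (n + 1) t))))
        (Set.Icc (0 : ℝ) tstar) t)
    (R : ℝ) (hR : 0 < R)
    (hbound : ∀ n : ℕ, ∀ t ∈ Set.Icc (0 : ℝ) tstar, ‖u n t‖ ≤ R ^ (n + 1)) :
    ∀ n : ℕ, ∀ t ∈ Set.Icc (0 : ℝ) tstar, u n t = 0 := by
  have hderiv_le (n : ℕ) (t : ℝ) :
      ‖U n t (Lop n (U (n + 1) (-t) (u (n + 1) t)))‖ ≤ C * (n + 1) * ‖u (n + 1) t‖ := by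
    rw [LinearIsometryEquiv.norm_map]
    calc ‖Lop n (U (n + 1) (-t) (u (n + 1) t))‖
        ≤ ‖Lop n‖ * ‖U (n + 1) (-t) (u (n + 1) t)‖ := (Lop n).le_opNorm _
      _ ≤ C * (n + 1) * ‖u (n + 1) t‖ := by
          rw [LinearIsometryEquiv.norm_map]
          gcongr
          exact hLop n
  exact hierarchy_eq_zero hC.le hR.le huode (fun n t _ => hderiv_le n t) hu0 hbound

/-- uniqueness for abstract infinite hierarchies: let `(E n)` be a
sequence of Banach spaces (here `E n` plays the role of `E_{n+1}`), `U n` a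
strongly continuous one-parameter group of linear isometries of `E n`, and
`Lop n : E (n+1) → E n` bounded linear operators with `‖Lop n‖ ≤ C (n+1)`.  If
`u n ∈ C¹([0,t*], E n)` satisfy `u̇ₙ(t) = Uₙ(t) Lₙ U_{n+1}(−t) u_{n+1}(t)`,
`uₙ(0) = 0` and `sup_{[0,t*]} ‖uₙ(t)‖ ≤ R^{n+1}` for some `R > 0`, then `u ≡ 0`. -/
theorem stmt19
    (E : ℕ → Type*) [∀ n, NormedAddCommGroup (E n)] [∀ n, NormedSpace ℝ (E n)]
    [∀ n, CompleteSpace (E n)]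
    (U : (n : ℕ) → ℝ → (E n ≃ₗᵢ[ℝ] E n))
    (hU0 : ∀ n, U n 0 = LinearIsometryEquiv.refl ℝ (E n))
    (hUgroup : ∀ n, ∀ s t : ℝ, ∀ x : E n, U n (s + t) x = U n s (U n t x))
    (hUcont : ∀ n, ∀ x : E n, Continuous fun t => U n t x)
    (Lop : (n : ℕ) → E (n + 1) →L[ℝ] E n)
    (C : ℝ) (hC : 0 < C) (hLop : ∀ n : ℕ, ‖Lop n‖ ≤ C * (n + 1))
    (tstar : ℝ) (htstar : 0 < tstar)
    (u : (n : ℕ) → ℝ → E n)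
    (hu0 : ∀ n, u n 0 = 0)
    (huode : ∀ n : ℕ, ∀ t ∈ Set.Icc (0 : ℝ) tstar,
      HasDerivWithinAt (u n)
        (U n t (Lop n (U (n + 1) (-t) (u (n + 1) t))))
        (Set.Icc (0 : ℝ) tstar) t)
    (R : ℝ) (hR : 0 < R)
    (hbound : ∀ n : ℕ, ∀ t ∈ Set.Icc (0 : ℝ) tstar, ‖u n t‖ ≤ R ^ (n + 1)) :
    ∀ n : ℕ, ∀ t ∈ Set.Icc (0 : ℝ) tstar, u n t = 0 :=
  stmt19_general E U Lop C hC hLop tstar u hu0 huode R hR hbound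
end
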